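/- arXiv:2203.09614 — 7 statements merged into one kernel-verified Lean document; each statement's English description precedes it below -/
import Mathlib

section
/- If for each k ∈ ℕ, (a_{k,n})_{n} is a sequence of positive reals with a_{k,n} → ∞ as n → ∞, then there exists a sequence of positive reals (b_n) with b_n → ∞ and a_{k,n}/b_n → ∞ as n → ∞ for every k ∈ ℕ. -/
open Filter

theorem stmt_0 (a : ℕ → ℕ → ℝ) (hpos : ∀ k n, 0 < a k n)
    (hlim : ∀ k, Tendsto (fun n => a k n) atTop atTop) :
    ∃ b : ℕ → ℝ, (∀ n, 0 < b n) ∧ Tendsto b atTop atTop ∧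
      ∀ k, Tendsto (fun n => a k n / b n) atTop atTop := by
  classical
  have hsqrt : Tendsto Real.sqrt atTop atTop := by
    rw [tendsto_atTop]
    intro C
    filter_upwards [eventually_ge_atTop ((max C 0) ^ 2)] with x hx
    calc C ≤ max C 0 := le_max_left _ _
      _ = Real.sqrt ((max C 0) ^ 2) := (Real.sqrt_sq (le_max_right _ _)).symm
      _ ≤ Real.sqrt x := Real.sqrt_le_sqrt hx
  set m : ℕ → ℕ → ℝ := fun k n => (Finset.range (k+1)).inf' (by simp) (fun j => a j n) with hm
  have hmpos : ∀ k n, 0 < m k n := by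
    intro k n
    apply (Finset.lt_inf'_iff _).mpr
    intro j _; exact hpos j n
  have hmle : ∀ k n j, j ≤ k → m k n ≤ a j n := by
    intro k n j hj
    exact Finset.inf'_le _ (Finset.mem_range.mpr (Nat.lt_succ_of_le hj))
  have hmtend : ∀ k, Tendsto (fun n => m k n) atTop atTop := by
    intro k
    rw [tendsto_atTop]
    intro C
    have : ∀ᶠ n in atTop, ∀ j ∈ Finset.range (k+1), C ≤ a j n :=
      (Finset.range (k+1)).eventually_all.mpr (fun j _ => (hlim j).eventually_ge_atTop C)
    filter_upwards [this] with n hn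
    exact Finset.le_inf' _ _ hn
  have hN : ∀ k : ℕ, ∃ N : ℕ, ∀ n ≥ N, (k : ℝ) ≤ m k n := by
    intro k
    exact eventually_atTop.mp ((hmtend k).eventually_ge_atTop (k : ℝ))
  choose N hNspec using hN
  set g : ℕ → ℕ := fun n => Nat.findGreatest (fun k => N k ≤ n) n with hg
  set c : ℕ → ℝ := fun n => m (g n) n with hc
  have hcpos : ∀ n, 0 < c n := fun n => hmpos _ n
  have hctend : Tendsto c atTop atTop := by
    rw [tendsto_atTop]
    intro C
    obtain ⟨K, hK2⟩ := exists_nat_ge C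
    filter_upwards [eventually_ge_atTop K, eventually_ge_atTop (N K)] with n h1 h2
    have hgK : K ≤ g n := Nat.le_findGreatest h1 h2
    have hNg : N (g n) ≤ n := Nat.findGreatest_spec (P := fun k => N k ≤ n) h1 h2
    calc C ≤ (K : ℝ) := hK2
      _ ≤ (g n : ℝ) := by exact_mod_cast hgK
      _ ≤ m (g n) n := hNspec (g n) n hNg
  refine ⟨fun n => Real.sqrt (c n), fun n => Real.sqrt_pos.mpr (hcpos n), hsqrt.comp hctend, ?_⟩
  intro k
  apply tendsto_atTop_mono' atTop (f₁ := fun n => Real.sqrt (c n))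
  · filter_upwards [eventually_ge_atTop k, eventually_ge_atTop (N k),
      hctend.eventually_ge_atTop 1] with n h1 h2 hc1
    have hgk : k ≤ g n := Nat.le_findGreatest h1 h2
    have hca : c n ≤ a k n := hmle _ _ _ hgk
    have hb : 0 < Real.sqrt (c n) := Real.sqrt_pos.mpr (hcpos n)
    rw [le_div_iff₀ hb, Real.mul_self_sqrt (hcpos n).le]
    exact hca
  · exact hsqrt.comp hctend
end

section
/- Weak-type maximal function selection: if (f_n) is a sequence of continuous nonnegative functions on [0,1] with ∫₀¹ f_n(t) dt → 0, and (g_n) is a uniformly bounded sequence of continuous real-valued functions on [0,1] with limsup_n ∫₀¹ g_n(t) dt ≤ 0, then there exist t_n ∈ [0,1] such that Mf_n(t_n) → 0 and limsup_n g_n(t_n) ≤ 0, where Mf(τ) = sup over subintervals I ⊆ [0,1] containing τ of (1/|I|)∫_I f(t) dt. -/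
open Filter MeasureTheory Set
open scoped ENNReal Topology

/-!
For `α > 0` the Vitali covering lemma puts the points at which some interval average of `f`
exceeds `α` into a set `U` with `|U| ≤ (4/α) ∫ f`. Let `αₙ → 0` so slowly that also
`(1/αₙ) ∫ fₙ → 0`. Then `Gₙ = [0,1] \ Uₙ` has measure at least `1/2`, and tending to `1`, so the
average of `gₙ` over `Gₙ` is at most `2 max(0, ∫ gₙ + C |Uₙ|)`. A point `tₙ ∈ Gₙ` where `gₙ` is
at most this average does the job, since `Mfₙ(tₙ) ≤ αₙ` off `Uₙ`.
-/

def intervalAverages (a b : ℝ) (f : ℝ → ℝ) (τ : ℝ) : Set ℝ :=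
  {y | ∃ t₁ t₂ : ℝ, a ≤ t₁ ∧ t₂ ≤ b ∧ t₁ < t₂ ∧ τ ∈ Icc t₁ t₂ ∧
    y = (t₂ - t₁)⁻¹ * ∫ s in t₁..t₂, f s}

noncomputable def maximalFunction (a b : ℝ) (f : ℝ → ℝ) (τ : ℝ) : ℝ :=
  sSup (intervalAverages a b f τ)

lemma exists_countable_disjoint_subfamily_Icc {T : Set (ℝ × ℝ)} {R : ℝ}
    (hT : ∀ p ∈ T, p.1 < p.2 ∧ p.2 - p.1 ≤ R) :
    ∃ u ⊆ T, u.Countable ∧ u.PairwiseDisjoint (fun p => Icc p.1 p.2) ∧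
      ∀ p ∈ T, ∃ q ∈ u, Icc p.1 p.2 ⊆ Metric.closedBall ((q.1 + q.2) / 2) (2 * (q.2 - q.1)) := by
  have hball : ∀ p : ℝ × ℝ, Metric.closedBall ((p.1 + p.2) / 2) ((p.2 - p.1) / 2) = Icc p.1 p.2 :=
    fun p => by rw [Real.closedBall_eq_Icc]; congr 1 <;> ring
  obtain ⟨u, huT, hdisj, hcov⟩ := Vitali.exists_disjoint_subfamily_covering_enlargement_closedBall
    T (fun p => (p.1 + p.2) / 2) (fun p => (p.2 - p.1) / 2) (R / 2)
    (fun p hp => by linarith [hT p hp]) 4 (by norm_num)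
  simp only [hball] at hdisj hcov
  refine ⟨u, huT, hdisj.countable_of_nonempty_interior fun p hp => ?_, hdisj, fun p hp => ?_⟩
  · simpa [interior_Icc] using (hT p (huT hp)).1
  · obtain ⟨q, hq, hsub⟩ := hcov p hp
    exact ⟨q, hq, by convert hsub using 2; ring⟩

section Maximal

variable {a b : ℝ} {f : ℝ → ℝ}

lemma maximalFunction_nonneg (hf0 : ∀ t ∈ Icc a b, 0 ≤ f t) (τ : ℝ) :
    0 ≤ maximalFunction a b f τ := by
  refine Real.sSup_nonneg ?_
  rintro y ⟨t₁, t₂, h₁, h₂, h₁₂, -, rfl⟩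
  refine mul_nonneg (inv_nonneg.2 (sub_nonneg.2 h₁₂.le)) ?_
  exact intervalIntegral.integral_nonneg h₁₂.le fun t ht => hf0 t (Icc_subset_Icc h₁ h₂ ht)

lemma ofReal_intervalIntegral_eq_lintegral {t₁ t₂ : ℝ} (h : t₁ ≤ t₂)
    (hf : IntegrableOn f (Icc t₁ t₂)) (hf0 : ∀ t ∈ Icc t₁ t₂, 0 ≤ f t) :
    ENNReal.ofReal (∫ s in t₁..t₂, f s) = ∫⁻ s in Icc t₁ t₂, ENNReal.ofReal (f s) := by
  rw [intervalIntegral.integral_of_le h, ← integral_Icc_eq_integral_Ioc]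
  exact ofReal_integral_eq_lintegral_ofReal hf
    ((ae_restrict_iff' measurableSet_Icc).2 (.of_forall hf0))

lemma volume_Icc_le_of_lt_intervalAverage {t₁ t₂ α : ℝ} (hα : 0 < α) (h₁₂ : t₁ < t₂)
    (hf : IntegrableOn f (Icc t₁ t₂)) (hf0 : ∀ t ∈ Icc t₁ t₂, 0 ≤ f t)
    (havg : α < (t₂ - t₁)⁻¹ * ∫ s in t₁..t₂, f s) :
    volume (Icc t₁ t₂) ≤ ENNReal.ofReal α⁻¹ * ∫⁻ s in Icc t₁ t₂, ENNReal.ofReal (f s) := by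
  rw [Real.volume_Icc, ← ofReal_intervalIntegral_eq_lintegral h₁₂.le hf hf0,
    ← ENNReal.ofReal_mul (by positivity), inv_mul_eq_div]
  refine ENNReal.ofReal_le_ofReal ((le_div_iff₀ hα).2 ?_)
  linarith [(lt_inv_mul_iff₀ (sub_pos.2 h₁₂)).1 havg]

theorem volume_setOf_lt_intervalAverage_le (hab : a ≤ b) (hf : IntegrableOn f (Icc a b))
    (hf0 : ∀ t ∈ Icc a b, 0 ≤ f t) {α : ℝ} (hα : 0 < α) :
    volume {τ | ∃ y ∈ intervalAverages a b f τ, α < y} ≤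
      ENNReal.ofReal (4 / α * ∫ s in a..b, f s) := by
  set T : Set (ℝ × ℝ) :=
    {p | a ≤ p.1 ∧ p.2 ≤ b ∧ p.1 < p.2 ∧ α < (p.2 - p.1)⁻¹ * ∫ s in p.1..p.2, f s}
  obtain ⟨u, huT, hu, hdisj, hcov⟩ := exists_countable_disjoint_subfamily_Icc (T := T) (R := b - a)
    fun p ⟨h₁, h₂, h₁₂, _⟩ => ⟨h₁₂, by linarith⟩
  have hball : ∀ p : ℝ × ℝ, volume (Metric.closedBall ((p.1 + p.2) / 2) (2 * (p.2 - p.1))) =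
      ENNReal.ofReal 4 * volume (Icc p.1 p.2) := fun p => by
    rw [Real.volume_closedBall, Real.volume_Icc, ← ENNReal.ofReal_mul (by norm_num)]
    congr 1; ring
  have hcover : {τ | ∃ y ∈ intervalAverages a b f τ, α < y} ⊆
      ⋃ p ∈ u, Metric.closedBall ((p.1 + p.2) / 2) (2 * (p.2 - p.1)) := by
    rintro τ ⟨_, ⟨t₁, t₂, h₁, h₂, h₁₂, hτ, rfl⟩, hα⟩
    obtain ⟨q, hq, hsub⟩ := hcov (t₁, t₂) ⟨h₁, h₂, h₁₂, hα⟩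
    exact mem_biUnion hq (hsub hτ)
  have hsmall : ∀ p ∈ T,
      volume (Icc p.1 p.2) ≤ ENNReal.ofReal α⁻¹ * ∫⁻ s in Icc p.1 p.2, ENNReal.ofReal (f s) :=
    fun p ⟨h₁, h₂, h₁₂, havg⟩ => volume_Icc_le_of_lt_intervalAverage hα h₁₂
      (hf.mono_set (Icc_subset_Icc h₁ h₂)) (fun t ht => hf0 t (Icc_subset_Icc h₁ h₂ ht)) havg
  calc volume {τ | ∃ y ∈ intervalAverages a b f τ, α < y}
      ≤ ∑' p : u, ENNReal.ofReal 4 * volume (Icc p.1.1 p.1.2) := by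
        simpa only [hball] using (measure_mono hcover).trans (measure_biUnion_le volume hu _)
    _ ≤ ∑' p : u, ENNReal.ofReal 4 *
          (ENNReal.ofReal α⁻¹ * ∫⁻ s in Icc p.1.1 p.1.2, ENNReal.ofReal (f s)) := by
        gcongr with p
        exact hsmall p (huT p.2)
    _ = ENNReal.ofReal 4 * ENNReal.ofReal α⁻¹ *
          ∫⁻ s in ⋃ p ∈ u, Icc p.1 p.2, ENNReal.ofReal (f s) := by
        rw [ENNReal.tsum_mul_left, ENNReal.tsum_mul_left, mul_assoc,
          lintegral_biUnion hu (fun _ _ => measurableSet_Icc) hdisj]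
    _ ≤ ENNReal.ofReal 4 * ENNReal.ofReal α⁻¹ * ∫⁻ s in Icc a b, ENNReal.ofReal (f s) := by
        gcongr
        exact iUnion₂_subset fun p hp => Icc_subset_Icc (huT hp).1 (huT hp).2.1
    _ = ENNReal.ofReal (4 / α * ∫ s in a..b, f s) := by
        rw [← ENNReal.ofReal_mul (by norm_num), ← div_eq_mul_inv,
          ENNReal.ofReal_mul (by positivity), ofReal_intervalIntegral_eq_lintegral hab hf hf0]

end Maximal

theorem exists_mem_sdiff_le_two_mul_max {Ω : Type*} [MeasurableSpace Ω] {μ : Measure Ω}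
    {s U : Set Ω} (hs : μ s = 1) (hU : MeasurableSet U) (hsU : μ.real (s ∩ U) ≤ 1 / 2)
    {g : Ω → ℝ} (hg : IntegrableOn g s μ) {C : ℝ} (hC : ∀ x ∈ s, |g x| ≤ C) :
    ∃ x ∈ s \ U, g x ≤ 2 * max 0 ((∫ x in s, g x ∂μ) + C * μ.real (s ∩ U)) := by
  have hsU_fin : μ (s ∩ U) < ∞ := (measure_mono inter_subset_left).trans_lt (by simp [hs])
  have hgood_fin : μ (s \ U) ≠ ∞ := measure_ne_top_of_subset sdiff_subset (by simp [hs])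
  have hgood : 1 / 2 ≤ μ.real (s \ U) := by
    have := measureReal_sdiff_add_inter (μ := μ) (s := s) hU (by simp [hs])
    rw [measureReal_def μ s, hs, ENNReal.toReal_one] at this
    linarith
  have hbad : -(C * μ.real (s ∩ U)) ≤ ∫ x in s ∩ U, g x ∂μ := by
    have := norm_setIntegral_le_of_norm_le_const hsU_fin fun x hx =>
      (Real.norm_eq_abs (g x)).trans_le (hC x hx.1)
    exact neg_le_of_abs_le this
  have hsplit := integral_inter_add_sdiff (μ := μ) hU hg
  obtain ⟨x, hx, hgx⟩ := exists_le_setAverage (μ := μ) (s := s \ U)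
    ((measureReal_ne_zero_iff hgood_fin).1 (by linarith)) hgood_fin (hg.mono_set sdiff_subset)
  refine ⟨x, hx, hgx.trans ?_⟩
  rw [setAverage_eq, smul_eq_mul]
  rcases le_or_gt (∫ x in s \ U, g x ∂μ) 0 with hneg | hpos
  · exact (mul_nonpos_of_nonneg_of_nonpos (by positivity) hneg).trans (by positivity)
  · calc (μ.real (s \ U))⁻¹ * ∫ x in s \ U, g x ∂μ ≤ 2 * ∫ x in s \ U, g x ∂μ := by
          gcongr
          rw [inv_le_comm₀ (by linarith) two_pos]
          linarith
      _ ≤ _ := by gcongr; exact le_max_of_le_right (by linarith)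

theorem exists_maximalFunction_le_and_le {f g : ℝ → ℝ} (hf : IntegrableOn f (Icc 0 1))
    (hf0 : ∀ t ∈ Icc (0 : ℝ) 1, 0 ≤ f t) (hg : IntegrableOn g (Icc 0 1)) {C : ℝ}
    (hC : ∀ t ∈ Icc (0 : ℝ) 1, |g t| ≤ C) {α : ℝ} (hα : 0 < α)
    (hfα : 8 * ∫ s in (0 : ℝ)..1, f s ≤ α) :
    ∃ t ∈ Icc (0 : ℝ) 1, maximalFunction 0 1 f t ≤ α ∧
      g t ≤ 2 * max 0 ((∫ s in (0 : ℝ)..1, g s) + C * (4 / α * ∫ s in (0 : ℝ)..1, f s)) := by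
  set E := {τ | ∃ y ∈ intervalAverages 0 1 f τ, α < y}
  set m := 4 / α * ∫ s in (0 : ℝ)..1, f s
  have hm0 : 0 ≤ m := by
    have := intervalIntegral.integral_nonneg (μ := volume) zero_le_one hf0
    positivity
  have hUm : volume.real (Icc 0 1 ∩ toMeasurable volume E) ≤ m := by
    refine ENNReal.toReal_le_of_le_ofReal hm0 ?_
    calc volume (Icc 0 1 ∩ toMeasurable volume E) ≤ volume E :=
          (measure_mono inter_subset_right).trans_eq (measure_toMeasurable E)
      _ ≤ ENNReal.ofReal m := volume_setOf_lt_intervalAverage_le zero_le_one hf hf0 hα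
  have hm_half : m ≤ 1 / 2 := by
    simp only [m]
    rw [div_mul_eq_mul_div, div_le_iff₀ hα]
    linarith
  obtain ⟨t, ⟨ht, htE⟩, hgt⟩ := exists_mem_sdiff_le_two_mul_max (by simp [Real.volume_Icc])
    (measurableSet_toMeasurable volume E) (hUm.trans hm_half) hg hC
  refine ⟨t, ht, ?_, ?_⟩
  · refine Real.sSup_le (fun y hy => not_lt.1 fun hαy => ?_) hα.le
    exact htE (subset_toMeasurable _ _ ⟨y, hy, hαy⟩)
  · have hC0 : 0 ≤ C := (abs_nonneg _).trans (hC 0 ⟨le_rfl, zero_le_one⟩)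
    rw [integral_Icc_eq_integral_Ioc, ← intervalIntegral.integral_of_le zero_le_one] at hgt
    exact hgt.trans (by gcongr)

theorem limsup_nonpos_of_le_two_mul_max {ι : Type*} {l : Filter ι} {u a c : ι → ℝ}
    (hu : ∀ i, u i ≤ 2 * max 0 (a i + c i)) (hu_cobdd : IsCoboundedUnder (· ≤ ·) l u)
    (ha : limsup a l ≤ 0) (ha_bdd : IsBoundedUnder (· ≤ ·) l a) (hc : Tendsto c l (𝓝 0)) :
    limsup u l ≤ 0 := by
  refine le_of_forall_pos_le_add fun δ hδ => ?_
  rw [zero_add]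
  refine limsup_le_of_le hu_cobdd ?_
  filter_upwards [eventually_lt_of_limsup_lt (ha.trans_lt (by positivity : (0 : ℝ) < δ / 4)) ha_bdd,
    hc.eventually (gt_mem_nhds (by positivity : (0 : ℝ) < δ / 4))] with i hai hci
  have : max 0 (a i + c i) ≤ δ / 2 := max_le (by positivity) (by linarith)
  linarith [hu i]

theorem stmt_1 (f g : ℕ → ℝ → ℝ)
    (hf_cont : ∀ n, ContinuousOn (f n) (Set.Icc 0 1))
    (hf_nonneg : ∀ n, ∀ t ∈ Set.Icc (0:ℝ) 1, 0 ≤ f n t)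
    (hf_int : Tendsto (fun n => ∫ t in (0:ℝ)..1, f n t) atTop (nhds 0))
    (C : ℝ)
    (hg_cont : ∀ n, ContinuousOn (g n) (Set.Icc 0 1))
    (hg_bdd : ∀ n, ∀ t ∈ Set.Icc (0:ℝ) 1, |g n t| ≤ C)
    (hg_limsup : limsup (fun n => ∫ t in (0:ℝ)..1, g n t) atTop ≤ 0) :
    ∃ t : ℕ → ℝ, (∀ n, t n ∈ Set.Icc (0:ℝ) 1) ∧
      Tendsto (fun n => sSup {y : ℝ | ∃ t₁ t₂ : ℝ, 0 ≤ t₁ ∧ t₂ ≤ 1 ∧ t₁ < t₂ ∧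
          t n ∈ Set.Icc t₁ t₂ ∧ y = (t₂ - t₁)⁻¹ * ∫ s in t₁..t₂, f n s})
        atTop (nhds 0) ∧
      limsup (fun n => g n (t n)) atTop ≤ 0 := by
  set ε : ℕ → ℝ := fun n => ∫ s in (0:ℝ)..1, f n s
  have hε : ∀ n, 0 ≤ ε n := fun n => intervalIntegral.integral_nonneg zero_le_one (hf_nonneg n)
  -- `√εₙ ≤ αₙ` makes `εₙ / αₙ ≤ √εₙ` small, and `8 εₙ ≤ αₙ` keeps the bad set below measure `1/2`
  set α : ℕ → ℝ := fun n => 8 * ε n + √(ε n) + 1 / (n + 1)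
  have hα : ∀ n, 0 < α n := fun n => by have := hε n; positivity
  choose t ht hMt hgt using fun n => exists_maximalFunction_le_and_le (hf_cont n).integrableOn_Icc
    (hf_nonneg n) (hg_cont n).integrableOn_Icc (hg_bdd n) (hα n)
    (by simp only [α]; linarith [Real.sqrt_nonneg (ε n), (by positivity : (0 : ℝ) < 1 / (n + 1))])
  have hα_lim : Tendsto α atTop (𝓝 0) := by
    simpa [α] using
      ((hf_int.const_mul 8).add hf_int.sqrt).add tendsto_one_div_add_atTop_nhds_zero_nat
  have hm_lim : Tendsto (fun n => 4 / α n * ε n) atTop (𝓝 0) := by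
    refine squeeze_zero (fun n => by have := hε n; have := hα n; positivity) (fun n => ?_)
      (by simpa using hf_int.sqrt.const_mul 4)
    rw [div_mul_eq_mul_div, div_le_iff₀ (hα n)]
    have : √(ε n) ≤ α n := by
      simp only [α]; linarith [hε n, (by positivity : (0 : ℝ) < 1 / (n + 1))]
    nlinarith [Real.sq_sqrt (hε n), Real.sqrt_nonneg (ε n)]
  refine ⟨t, ht, squeeze_zero (fun n => maximalFunction_nonneg (hf_nonneg n) _) hMt hα_lim, ?_⟩
  refine limsup_nonpos_of_le_two_mul_max hgt
    (isCoboundedUnder_le_of_le atTop fun n => (abs_le.1 (hg_bdd n _ (ht n))).1) hg_limsup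
    ⟨C, eventually_map.2 (.of_forall fun n => ?_)⟩ (by simpa using hm_lim.const_mul C)
  calc ∫ s in (0:ℝ)..1, g n s ≤ ∫ s in (0:ℝ)..1, C :=
        intervalIntegral.integral_mono_on zero_le_one
          ((hg_cont n).intervalIntegrable_of_Icc zero_le_one)
          intervalIntegrable_const fun s hs => (abs_le.1 (hg_bdd n s hs)).2
    _ = C := by simp
end

section
/- Interaction integral identity: for D ≥ 3, ((D+2)/(D−2)) ∫₀^∞ ΛW(r) W(r)^{4/(D−2)} r^{D−1} dr = −((D−2)/(2D)) (D(D−2))^{D/2}, where W(r) = (1 + r²/(D(D−2)))^{−(D−2)/2} and ΛW = rW' + ((D−2)/2)W. -/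
/-!
Write `c = D(D-2)` and `s = 1 + r²/c`, so that `W = s^(-(D-2)/2)`. Then
`ΛW = ((D-2)/2) (1 - r²/c) s^(-D/2)` and `W^(4/(D-2)) = s^(-2)`, so the integrand, multiplied by
`(D+2)/(D-2)`, is the derivative of `r^D s^(-D/2-1) - ((D-2)/(2D)) r^D s^(-D/2)`. This vanishes at
`0` and tends to `-((D-2)/(2D)) c^(D/2)` at infinity, because `r^D s^(-D/2) → c^(D/2)`.
Integrability comes from `|1 - r²/c| ≤ s`, which dominates the integrand by `r^(D-1) s^(-D/2-1)`,
the nonnegative derivative of `r^D s^(-D/2) / D`.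
-/

open MeasureTheory

/-- The Aubin–Talenti profile in radial coordinates. -/
noncomputable def AubinTalentiW (D : ℕ) (r : ℝ) : ℝ :=
  (1 + r ^ 2 / ((D : ℝ) * ((D : ℝ) - 2))) ^ (-(((D : ℝ) - 2) / 2))

/-- The scaling mode `ΛW = r W' + ((D-2)/2) W`. -/
noncomputable def LamW (D : ℕ) (r : ℝ) : ℝ :=
  r * deriv (AubinTalentiW D) r + ((D : ℝ) - 2) / 2 * AubinTalentiW D r

open Real Set Filter Topology

section
variable {c : ℝ}

theorem hasDerivAt_one_add_sq_div_rpow (hc : 0 < c) (q r : ℝ) :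
    HasDerivAt (fun x => (1 + x ^ 2 / c) ^ q) (q * (2 * r / c) * (1 + r ^ 2 / c) ^ (q - 1)) r := by
  have hs : HasDerivAt (fun x => 1 + x ^ 2 / c) (2 * r / c) r := by
    simpa using ((hasDerivAt_pow 2 r).div_const c).const_add 1
  convert hs.rpow_const (p := q) (Or.inl (by positivity)) using 1
  ring

theorem hasDerivAt_pow_mul_one_add_sq_div_rpow (hc : 0 < c) {n : ℕ} (hn : 1 ≤ n) (q r : ℝ) :
    HasDerivAt (fun x => x ^ n * (1 + x ^ 2 / c) ^ q)
      (r ^ (n - 1) * (1 + r ^ 2 / c) ^ (q - 1) * (n + (n + 2 * q) * (r ^ 2 / c))) r := by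
  have hs : 0 < 1 + r ^ 2 / c := by positivity
  refine ((hasDerivAt_pow n r).mul (hasDerivAt_one_add_sq_div_rpow hc q r)).congr_deriv ?_
  obtain ⟨m, rfl⟩ : ∃ m, n = m + 1 := ⟨n - 1, by omega⟩
  rw [Nat.add_sub_cancel, rpow_sub_one hs.ne']
  field_simp
  push_cast
  ring

theorem tendsto_pow_mul_one_add_sq_div_rpow_neg_half (hc : 0 < c) (n : ℕ) :
    Tendsto (fun x => x ^ n * (1 + x ^ 2 / c) ^ (-(n : ℝ) / 2)) atTop (𝓝 (c ^ ((n : ℝ) / 2))) := by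
  have hratio : Tendsto (fun x : ℝ => x ^ 2 / (1 + x ^ 2 / c)) atTop (𝓝 c) := by
    have h : Tendsto (fun x : ℝ => c - c ^ 2 / (c + x ^ 2)) atTop (𝓝 (c - 0)) :=
      tendsto_const_nhds.sub <| tendsto_const_nhds.div_atTop <|
        tendsto_atTop_add_const_left _ _ (tendsto_pow_atTop two_ne_zero)
    rw [sub_zero] at h
    refine h.congr fun x => ?_
    have : 0 < c + x ^ 2 := by positivity
    field_simp
    ring
  refine (((continuousAt_rpow_const _ _ (Or.inl hc.ne')).tendsto).comp hratio).congr' ?_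
  filter_upwards [Ioi_mem_atTop 0] with x (hx : 0 < x)
  have hs : 0 < 1 + x ^ 2 / c := by positivity
  have hpow : (x ^ 2) ^ ((n : ℝ) / 2) = x ^ n := by
    rw [← rpow_natCast x 2, ← rpow_mul hx.le, ← rpow_natCast x n]
    congr 1; push_cast; ring
  rw [Function.comp_apply, div_rpow (by positivity) hs.le, hpow, neg_div, rpow_neg hs.le,
    div_eq_mul_inv]

theorem tendsto_pow_mul_one_add_sq_div_rpow_neg_half_sub_one (hc : 0 < c) (n : ℕ) :
    Tendsto (fun x => x ^ n * (1 + x ^ 2 / c) ^ (-(n : ℝ) / 2 - 1)) atTop (𝓝 0) := by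
  have hinv : Tendsto (fun x : ℝ => (1 + x ^ 2 / c)⁻¹) atTop (𝓝 0) :=
    (tendsto_atTop_add_const_left _ _
      ((tendsto_pow_atTop two_ne_zero).atTop_div_const hc)).inv_tendsto_atTop
  have h := (tendsto_pow_mul_one_add_sq_div_rpow_neg_half hc n).mul hinv
  rw [mul_zero] at h
  refine h.congr fun x => ?_
  have hs : 0 < 1 + x ^ 2 / c := by positivity
  rw [rpow_sub_one hs.ne']
  ring

theorem integrableOn_pow_mul_one_add_sq_div_rpow (hc : 0 < c) {n : ℕ} (hn : 1 ≤ n) :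
    IntegrableOn (fun x => x ^ (n - 1) * (1 + x ^ 2 / c) ^ (-(n : ℝ) / 2 - 1)) (Ioi 0) := by
  have hn0 : (n : ℝ) ≠ 0 := by positivity
  refine integrableOn_Ioi_deriv_of_nonneg'
    (g := fun x => x ^ n * (1 + x ^ 2 / c) ^ (-(n : ℝ) / 2) / n)
    (fun x _ => ((hasDerivAt_pow_mul_one_add_sq_div_rpow hc hn _ x).div_const _).congr_deriv ?_)
    (fun x (hx : 0 < x) => by positivity)
    ((tendsto_pow_mul_one_add_sq_div_rpow_neg_half hc n).div_const _)
  field_simp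
  ring

theorem integrableOn_one_sub_sq_div_mul_pow_mul_rpow (hc : 0 < c) {n : ℕ} (hn : 1 ≤ n) :
    IntegrableOn
      (fun x => (1 - x ^ 2 / c) * x ^ (n - 1) * (1 + x ^ 2 / c) ^ (-(n : ℝ) / 2 - 2)) (Ioi 0) := by
  refine (integrableOn_pow_mul_one_add_sq_div_rpow hc hn).mono' ?_ ?_
  · have hpow : Continuous fun x => (1 + x ^ 2 / c) ^ (-(n : ℝ) / 2 - 2) :=
      (by fun_prop : Continuous fun x : ℝ => 1 + x ^ 2 / c).rpow_const
        fun x => Or.inl (by positivity)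
    exact (Continuous.aestronglyMeasurable (by fun_prop)).restrict
  · refine (ae_restrict_iff' measurableSet_Ioi).mpr (ae_of_all _ fun x (hx : 0 < x) => ?_)
    have ht : 0 ≤ x ^ 2 / c := by positivity
    have hs : 0 < 1 + x ^ 2 / c := by positivity
    have habs : |1 - x ^ 2 / c| ≤ 1 + x ^ 2 / c := abs_le.mpr ⟨by linarith, by linarith⟩
    calc ‖(1 - x ^ 2 / c) * x ^ (n - 1) * (1 + x ^ 2 / c) ^ (-(n : ℝ) / 2 - 2)‖
        = |1 - x ^ 2 / c| * (x ^ (n - 1) * (1 + x ^ 2 / c) ^ (-(n : ℝ) / 2 - 2)) := by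
          rw [Real.norm_eq_abs, abs_mul, abs_mul, abs_of_pos (by positivity : 0 < x ^ (n - 1)),
            abs_of_pos (by positivity : 0 < (1 + x ^ 2 / c) ^ (-(n : ℝ) / 2 - 2)), mul_assoc]
      _ ≤ (1 + x ^ 2 / c) * (x ^ (n - 1) * (1 + x ^ 2 / c) ^ (-(n : ℝ) / 2 - 2)) := by
          gcongr
      _ = x ^ (n - 1) * (1 + x ^ 2 / c) ^ (-(n : ℝ) / 2 - 1) := by
          rw [show -(n : ℝ) / 2 - 1 = -(n : ℝ) / 2 - 2 + 1 by ring, rpow_add_one hs.ne']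
          ring

theorem hasDerivAt_antiderivative_one_sub_sq_div_mul_pow_mul_rpow (hc : 0 < c) {n : ℕ} (hn : 1 ≤ n)
    (r : ℝ) :
    HasDerivAt (fun x => x ^ n * (1 + x ^ 2 / c) ^ (-(n : ℝ) / 2 - 1)
        - (n - 2) / (2 * n) * (x ^ n * (1 + x ^ 2 / c) ^ (-(n : ℝ) / 2)))
      ((n + 2) / 2 * ((1 - r ^ 2 / c) * r ^ (n - 1) * (1 + r ^ 2 / c) ^ (-(n : ℝ) / 2 - 2))) r := by
  have hs : 0 < 1 + r ^ 2 / c := by positivity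
  have hn0 : (n : ℝ) ≠ 0 := by positivity
  refine ((hasDerivAt_pow_mul_one_add_sq_div_rpow hc hn _ r).sub
    ((hasDerivAt_pow_mul_one_add_sq_div_rpow hc hn _ r).const_mul _)).congr_deriv ?_
  rw [show -(n : ℝ) / 2 - 1 - 1 = -(n : ℝ) / 2 - 2 by ring,
    show -(n : ℝ) / 2 - 1 = -(n : ℝ) / 2 - 2 + 1 by ring, rpow_add_one hs.ne']
  field_simp
  ring

theorem integral_one_sub_sq_div_mul_pow_mul_rpow (hc : 0 < c) {n : ℕ} (hn : 1 ≤ n) :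
    ∫ x in Ioi 0,
        (n + 2) / 2 * ((1 - x ^ 2 / c) * x ^ (n - 1) * (1 + x ^ 2 / c) ^ (-(n : ℝ) / 2 - 2))
      = -((n - 2) / (2 * n)) * c ^ ((n : ℝ) / 2) := by
  rw [integral_Ioi_of_hasDerivAt_of_tendsto'
    (fun x _ => hasDerivAt_antiderivative_one_sub_sq_div_mul_pow_mul_rpow hc hn x)
    ((integrableOn_one_sub_sq_div_mul_pow_mul_rpow hc hn).const_mul _)
    ((tendsto_pow_mul_one_add_sq_div_rpow_neg_half_sub_one hc n).sub
      ((tendsto_pow_mul_one_add_sq_div_rpow_neg_half hc n).const_mul _))]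
  simp [zero_pow (by omega : n ≠ 0)]

end

section
variable {D : ℕ}

theorem natCast_mul_sub_two_pos (hD : 3 ≤ D) : (0 : ℝ) < D * (D - 2) := by
  have : (3 : ℝ) ≤ D := by exact_mod_cast hD
  nlinarith

theorem lamW_eq (hD : 3 ≤ D) (r : ℝ) :
    LamW D r = ((D : ℝ) - 2) / 2 * (1 - r ^ 2 / (D * (D - 2)))
      * (1 + r ^ 2 / (D * (D - 2))) ^ (-(D : ℝ) / 2) := by
  have hc := natCast_mul_sub_two_pos hD
  have hs : 0 < 1 + r ^ 2 / (D * (D - 2)) := by positivity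
  have hderiv : deriv (AubinTalentiW D) r = -(((D : ℝ) - 2) / 2) * (2 * r / (D * (D - 2)))
      * (1 + r ^ 2 / (D * (D - 2))) ^ (-(((D : ℝ) - 2) / 2) - 1) :=
    (hasDerivAt_one_add_sq_div_rpow hc _ r).deriv
  rw [LamW, hderiv, AubinTalentiW, show -(((D : ℝ) - 2) / 2) = -(D : ℝ) / 2 + 1 by ring,
    add_sub_cancel_right, rpow_add_one hs.ne']
  ring

theorem aubinTalentiW_rpow (hD : 3 ≤ D) (r : ℝ) :
    AubinTalentiW D r ^ ((4 : ℝ) / ((D : ℝ) - 2)) = (1 + r ^ 2 / (D * (D - 2))) ^ (-2 : ℝ) := by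
  have hc := natCast_mul_sub_two_pos hD
  have hD2 : (D : ℝ) - 2 ≠ 0 := right_ne_zero_of_mul hc.ne'
  rw [AubinTalentiW, ← rpow_mul (by positivity)]
  congr 1
  field_simp
  ring

theorem lamW_mul_aubinTalentiW_rpow_mul_rpow (hD : 3 ≤ D) (r : ℝ) :
    LamW D r * AubinTalentiW D r ^ ((4 : ℝ) / ((D : ℝ) - 2)) * r ^ ((D : ℝ) - 1)
      = ((D : ℝ) - 2) / 2 * ((1 - r ^ 2 / (D * (D - 2))) * r ^ (D - 1)
        * (1 + r ^ 2 / (D * (D - 2))) ^ (-(D : ℝ) / 2 - 2)) := by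
  have hs : 0 < 1 + r ^ 2 / (D * (D - 2)) := by positivity [natCast_mul_sub_two_pos hD]
  rw [lamW_eq hD, aubinTalentiW_rpow hD, ← Nat.cast_pred (by omega), rpow_natCast,
    show -(D : ℝ) / 2 - 2 = -(D : ℝ) / 2 + -2 by ring, rpow_add hs]
  ring

end

theorem stmt_7 (D : ℕ) (hD : 3 ≤ D) :
    ((D : ℝ) + 2) / ((D : ℝ) - 2)
      * ∫ r in Set.Ioi (0 : ℝ),
          LamW D r * (AubinTalentiW D r) ^ ((4 : ℝ) / ((D : ℝ) - 2)) * r ^ ((D : ℝ) - 1)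
      = -(((D : ℝ) - 2) / (2 * (D : ℝ))) * ((D : ℝ) * ((D : ℝ) - 2)) ^ ((D : ℝ) / 2) := by
  have hc := natCast_mul_sub_two_pos hD
  have hD2 : (D : ℝ) - 2 ≠ 0 := right_ne_zero_of_mul hc.ne'
  calc _ = ((D : ℝ) + 2) / ((D : ℝ) - 2) * (((D : ℝ) - 2) / 2 * ∫ r in Ioi (0 : ℝ),
          (1 - r ^ 2 / (D * (D - 2))) * r ^ (D - 1)
            * (1 + r ^ 2 / (D * (D - 2))) ^ (-(D : ℝ) / 2 - 2)) := by
        simp_rw [lamW_mul_aubinTalentiW_rpow_mul_rpow hD, integral_const_mul]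
    _ = ∫ r in Ioi (0 : ℝ), ((D : ℝ) + 2) / 2 * ((1 - r ^ 2 / (D * (D - 2))) * r ^ (D - 1)
            * (1 + r ^ 2 / (D * (D - 2))) ^ (-(D : ℝ) / 2 - 2)) := by
        rw [integral_const_mul]
        field_simp
    _ = _ := integral_one_sub_sq_div_mul_pow_mul_rpow hc (by omega)
end

section
/- Orthogonality/anomaly of the L²-scaling of ΛW: let Λ̲ := r∂_r + D/2. For every integer D ≥ 5, ∫₀^∞ (Λ̲ΛW)(r) · ΛW(r) r^{D−1} dr = 0, while for D = 4, ∫₀^∞ (Λ̲ΛW)(r) · ΛW(r) r³ dr = 32. -/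
/-!
The operator `Λ̲ = r∂_r + D/2` generates the `L²`-preserving scalings, and correspondingly
`(Λ̲f) f r^{D-1} = d/dr (r^D f² / 2)` for every differentiable `f`. Hence the integral is the
boundary value of `r^D (ΛW)² / 2` at infinity. Since `ΛW ~ -((D-2)/2) c^{(D-2)/2} r^{2-D}` with
`c = D(D-2)`, this boundary value is `((D-2)/2)² c^{D-2} / 2 · lim r^{4-D}`, which is `0` for
`D ≥ 5` and `64 / 2 = 32` for `D = 4`. For `D = 4` the integrand is still integrable because the
leading term of `Λ̲ΛW` cancels: `Λ̲ r^{2-D} = (2 - D/2) r^{2-D}`.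
-/

open MeasureTheory

/-- The L²-scaling generator applied to `ΛW`: `Λ̲(ΛW) = r (ΛW)' + (D/2) ΛW`. -/
noncomputable def ULamLamW (D : ℕ) (r : ℝ) : ℝ :=
  r * deriv (LamW D) r + (D : ℝ) / 2 * LamW D r

open Set Filter Topology

section ScalingPairing

variable {f : ℝ → ℝ} {a : ℝ}

theorem hasDerivAt_rpow_mul_sq_div_two {f' r : ℝ} (hf : HasDerivAt f f' r) (hr : 0 < r) :
    HasDerivAt (fun r => r ^ a * f r ^ 2 / 2) ((r * f' + a / 2 * f r) * f r * r ^ (a - 1)) r := by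
  refine (((Real.hasDerivAt_rpow_const (p := a) (Or.inl hr.ne')).mul (hf.pow 2)).div_const 2
    ).congr_deriv ?_
  rw [Real.rpow_sub_one hr.ne', Pi.pow_apply]
  field_simp
  ring

theorem integral_Ioi_scalingGenerator_mul_self (ha : 0 < a) (hf : Differentiable ℝ f) {L : ℝ}
    (hint : IntegrableOn (fun r => (r * deriv f r + a / 2 * f r) * f r * r ^ (a - 1)) (Ioi 0))
    (hlim : Tendsto (fun r => r ^ a * f r ^ 2 / 2) atTop (𝓝 L)) :
    ∫ r in Ioi 0, (r * deriv f r + a / 2 * f r) * f r * r ^ (a - 1) = L := by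
  have hcont : ContinuousWithinAt (fun r => r ^ a * f r ^ 2 / 2) (Ici 0) 0 :=
    (((Real.continuousAt_rpow_const 0 a (Or.inr ha.le)).mul
      (hf.continuous.pow 2).continuousAt).div_const 2).continuousWithinAt
  rw [integral_Ioi_of_hasDerivAt_of_tendsto hcont
    (fun r hr => hasDerivAt_rpow_mul_sq_div_two (hf r).hasDerivAt hr) hint hlim]
  simp [Real.zero_rpow ha.ne']

end ScalingPairing

namespace AubinTalentiW

noncomputable def decayExp (D : ℕ) : ℝ := ((D : ℝ) - 2) / 2

noncomputable def scaleSq (D : ℕ) : ℝ := (D : ℝ) * ((D : ℝ) - 2)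

noncomputable def base (D : ℕ) (r : ℝ) : ℝ := 1 + r ^ 2 / scaleSq D

variable {D : ℕ}

lemma scaleSq_pos (hD : 2 < D) : 0 < scaleSq D := by
  have : (2 : ℝ) < D := by exact_mod_cast hD
  unfold scaleSq; nlinarith

lemma one_le_base (hD : 2 < D) (r : ℝ) : 1 ≤ base D r := by
  have := scaleSq_pos hD
  unfold base; have : 0 ≤ r ^ 2 / scaleSq D := by positivity
  linarith

lemma base_pos (hD : 2 < D) (r : ℝ) : 0 < base D r := one_pos.trans_le (one_le_base hD r)

lemma continuous_base : Continuous (base D) := by unfold base; fun_prop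

lemma hasDerivAt_base (r : ℝ) : HasDerivAt (base D) (2 * r / scaleSq D) r := by
  refine (((hasDerivAt_pow 2 r).div_const (scaleSq D)).const_add 1).congr_deriv ?_
  ring

lemma eq_base_rpow : AubinTalentiW D = fun r => base D r ^ (-decayExp D) := rfl

lemma hasDerivAt_base_rpow (hD : 2 < D) (p r : ℝ) :
    HasDerivAt (fun r => base D r ^ p) (p * (2 * r / scaleSq D) * base D r ^ p / base D r) r := by
  refine ((hasDerivAt_base r).rpow_const (p := p) (Or.inl (base_pos hD r).ne')).congr_deriv ?_
  rw [Real.rpow_sub_one (base_pos hD r).ne']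
  ring

lemma lamW_eq (hD : 2 < D) (r : ℝ) :
    LamW D r = decayExp D * (1 - r ^ 2 / scaleSq D) * base D r ^ (-decayExp D) / base D r := by
  have hb := (base_pos hD r).ne'
  rw [LamW, eq_base_rpow, (hasDerivAt_base_rpow hD _ r).deriv]
  unfold base decayExp at *
  field_simp
  ring

lemma hasDerivAt_lamW (hD : 2 < D) (r : ℝ) :
    HasDerivAt (LamW D) (-2 * decayExp D * r / scaleSq D
      * (decayExp D + 2 - decayExp D * (r ^ 2 / scaleSq D))
      * base D r ^ (-decayExp D) / base D r ^ 2) r := by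
  have hb := (base_pos hD r).ne'
  have hpoly : HasDerivAt (fun r => decayExp D * (1 - r ^ 2 / scaleSq D))
      (decayExp D * -(2 * r / scaleSq D)) r := by
    refine ((((hasDerivAt_pow 2 r).div_const (scaleSq D)).const_sub 1).const_mul _).congr_deriv ?_
    ring
  rw [funext (lamW_eq hD)]
  refine ((hpoly.mul (hasDerivAt_base_rpow hD _ r)).div (hasDerivAt_base r) hb).congr_deriv ?_
  simp only [Pi.mul_apply]
  unfold base at *
  field_simp
  ring

lemma differentiable_lamW (hD : 2 < D) : Differentiable ℝ (LamW D) :=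
  fun r => (hasDerivAt_lamW hD r).differentiableAt

lemma uLamLamW_eq (hD : 2 < D) (r : ℝ) :
    ULamLamW D r = decayExp D * (decayExp D + 1 - 2 * (decayExp D + 2) * (r ^ 2 / scaleSq D)
      + (decayExp D - 1) * (r ^ 2 / scaleSq D) ^ 2) * base D r ^ (-decayExp D) / base D r ^ 2 := by
  have hD2 : (D : ℝ) / 2 = decayExp D + 1 := by unfold decayExp; ring
  rw [ULamLamW, (hasDerivAt_lamW hD r).deriv, lamW_eq hD, hD2]
  unfold base
  field_simp
  ring

lemma continuous_uLamLamW (hD : 2 < D) : Continuous (ULamLamW D) := by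
  have hrpow : Continuous fun r => base D r ^ (-decayExp D) :=
    continuous_base.rpow_const fun r => Or.inl (base_pos hD r).ne'
  rw [funext (uLamLamW_eq hD)]
  exact Continuous.div (by fun_prop) (continuous_base.pow 2)
    fun r => pow_ne_zero 2 (base_pos hD r).ne'

lemma decayExp_pos (hD : 2 < D) : 0 < decayExp D := by
  have : (2 : ℝ) < D := by exact_mod_cast hD
  unfold decayExp; linarith

lemma abs_lamW_le (hD : 2 < D) (r : ℝ) :
    |LamW D r| ≤ decayExp D * base D r ^ (-decayExp D) := by
  have hb := base_pos hD r
  have hq := decayExp_pos hD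
  have hs : 0 ≤ r ^ 2 / scaleSq D := div_nonneg (sq_nonneg r) (scaleSq_pos hD).le
  have h1s : |1 - r ^ 2 / scaleSq D| ≤ base D r := by
    rw [abs_le]; unfold base; constructor <;> linarith
  rw [lamW_eq hD, abs_div, abs_mul, abs_mul, abs_of_pos hq, abs_of_pos hb,
    abs_of_pos (Real.rpow_pos_of_pos hb _), div_le_iff₀ hb]
  have := Real.rpow_pos_of_pos hb (-decayExp D)
  calc decayExp D * |1 - r ^ 2 / scaleSq D| * base D r ^ (-decayExp D)
      ≤ decayExp D * base D r * base D r ^ (-decayExp D) := by gcongr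
    _ = _ := by ring

lemma abs_uLamLamW_le (hD : 4 ≤ D) (r : ℝ) :
    |ULamLamW D r| ≤ decayExp D * (decayExp D + 2) * base D r ^ (-decayExp D) := by
  have hD2 : 2 < D := by omega
  have hb := base_pos hD2 r
  have hq := decayExp_pos hD2
  have hq1 : 1 ≤ decayExp D := by
    have : (4 : ℝ) ≤ D := by exact_mod_cast hD
    unfold decayExp; linarith
  set s := r ^ 2 / scaleSq D
  have hs : 0 ≤ s := div_nonneg (sq_nonneg r) (scaleSq_pos hD2).le
  have hbs : base D r = 1 + s := rfl
  have hP : |decayExp D + 1 - 2 * (decayExp D + 2) * s + (decayExp D - 1) * s ^ 2|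
      ≤ (decayExp D + 2) * base D r ^ 2 := by
    rw [abs_le, hbs]; constructor <;> nlinarith
  have hB := Real.rpow_pos_of_pos hb (-decayExp D)
  rw [uLamLamW_eq hD2, abs_div, abs_mul, abs_mul, abs_of_pos hq, abs_of_pos hB,
    abs_of_pos (pow_pos hb 2), div_le_iff₀ (pow_pos hb 2)]
  calc decayExp D * |_| * base D r ^ (-decayExp D)
      ≤ decayExp D * ((decayExp D + 2) * base D r ^ 2) * base D r ^ (-decayExp D) := by gcongr
    _ = _ := by ring

lemma abs_uLamLamW_four_le (r : ℝ) : |ULamLamW 4 r| ≤ 6 * base 4 r ^ (-2 : ℝ) := by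
  have hb := base_pos (by norm_num : 2 < 4) r
  have hq : decayExp 4 = 1 := by norm_num [decayExp]
  have hs : 0 ≤ r ^ 2 / scaleSq 4 := div_nonneg (sq_nonneg r) (scaleSq_pos (by norm_num)).le
  have hbs : base 4 r = 1 + r ^ 2 / scaleSq 4 := rfl
  have hP : |2 - 6 * (r ^ 2 / scaleSq 4)| ≤ 6 * base 4 r := by
    rw [abs_le, hbs]; constructor <;> linarith
  have hU : ULamLamW 4 r = (2 - 6 * (r ^ 2 / scaleSq 4)) / base 4 r ^ 3 := by
    rw [uLamLamW_eq (by norm_num), hq, Real.rpow_neg_one]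
    field_simp
    ring
  rw [hU, abs_div, abs_of_pos (pow_pos hb 3), div_le_iff₀ (pow_pos hb 3), Real.rpow_neg hb.le,
    Real.rpow_two]
  calc _ ≤ 6 * base 4 r := hP
    _ = _ := by field_simp

lemma base_rpow_neg_le (hD : 2 < D) {r m : ℝ} (hr : 0 < r) (hm : 0 ≤ m) :
    base D r ^ (-m) ≤ scaleSq D ^ m * r ^ (-(2 * m)) := by
  have hc := scaleSq_pos hD
  calc base D r ^ (-m) ≤ (r ^ 2 / scaleSq D) ^ (-m) :=
        Real.rpow_le_rpow_of_nonpos (by positivity) (by unfold base; linarith) (by linarith)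
    _ = scaleSq D ^ m * r ^ (-(2 * m)) := by
        rw [Real.div_rpow (by positivity) hc.le, ← Real.rpow_natCast, ← Real.rpow_mul hr.le,
          Real.rpow_neg hc.le, neg_mul_eq_mul_neg]
        push_cast
        field_simp

lemma abs_uLamLamW_mul_lamW_mul_rpow_le (hD : 2 < D) {K m r : ℝ} (hm : 0 ≤ m)
    (hbound : ∀ r, |ULamLamW D r| ≤ K * base D r ^ (-m)) (hr : 0 < r) :
    |ULamLamW D r * LamW D r * r ^ ((D : ℝ) - 1)|
      ≤ K * decayExp D * scaleSq D ^ (m + decayExp D) * r ^ (1 - 2 * m) := by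
  have hq := decayExp_pos hD
  have hc := scaleSq_pos hD
  have hK : 0 ≤ K := by
    have := (abs_nonneg _).trans (hbound r)
    exact nonneg_of_mul_nonneg_left this (Real.rpow_pos_of_pos (base_pos hD r) _)
  have hrD : r ^ (1 - 2 * m) = r ^ (-(2 * m)) * r ^ (-(2 * decayExp D)) * r ^ ((D : ℝ) - 1) := by
    rw [← Real.rpow_add hr, ← Real.rpow_add hr]
    unfold decayExp; ring_nf
  rw [abs_mul, abs_mul, abs_of_pos (Real.rpow_pos_of_pos hr _), hrD,
    Real.rpow_add hc]
  calc |ULamLamW D r| * |LamW D r| * r ^ ((D : ℝ) - 1)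
      ≤ (K * base D r ^ (-m)) * (decayExp D * base D r ^ (-decayExp D))
          * r ^ ((D : ℝ) - 1) := by
        refine mul_le_mul_of_nonneg_right (mul_le_mul (hbound r) (abs_lamW_le hD r) (abs_nonneg _)
          ?_) (Real.rpow_nonneg hr.le _)
        exact mul_nonneg hK (Real.rpow_nonneg (base_pos hD r).le _)
    _ ≤ (K * (scaleSq D ^ m * r ^ (-(2 * m))))
          * (decayExp D * (scaleSq D ^ decayExp D * r ^ (-(2 * decayExp D))))
          * r ^ ((D : ℝ) - 1) := by
        have := Real.rpow_nonneg (base_pos hD r).le (-decayExp D)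
        gcongr
        exacts [base_rpow_neg_le hD hr hm, base_rpow_neg_le hD hr hq.le]
    _ = _ := by ring

lemma integrableOn_uLamLamW_mul_lamW_mul_rpow (hD : 2 < D) {K m : ℝ} (hm : 1 < m)
    (hbound : ∀ r, |ULamLamW D r| ≤ K * base D r ^ (-m)) :
    IntegrableOn (fun r => ULamLamW D r * LamW D r * r ^ ((D : ℝ) - 1)) (Ioi 0) := by
  have hcont : Continuous fun r => ULamLamW D r * LamW D r * r ^ ((D : ℝ) - 1) := by
    have : (0 : ℝ) ≤ (D : ℝ) - 1 := by
      have : (2 : ℝ) < D := by exact_mod_cast hD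
      linarith
    exact ((continuous_uLamLamW hD).mul (differentiable_lamW hD).continuous).mul
      (Real.continuous_rpow_const this)
  rw [← Ioc_union_Ioi_eq_Ioi zero_le_one]
  refine hcont.integrableOn_Ioc.union ?_
  have hmajorant := (integrableOn_Ioi_rpow_of_lt (a := 1 - 2 * m) (by linarith) one_pos).const_mul
    (K * decayExp D * scaleSq D ^ (m + decayExp D))
  refine Integrable.mono' hmajorant hcont.aestronglyMeasurable.restrict ?_
  filter_upwards [ae_restrict_mem measurableSet_Ioi] with r hr
  exact abs_uLamLamW_mul_lamW_mul_rpow_le hD (by linarith) hbound (one_pos.trans hr)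

lemma rpow_mul_lamW_sq_div_two_eq (hD : 2 < D) {r : ℝ} (hr : 0 < r) :
    r ^ (D : ℝ) * LamW D r ^ 2 / 2 = decayExp D ^ 2 / 2 * r ^ (4 - (D : ℝ))
      * (1 / scaleSq D - r⁻¹ ^ 2) ^ 2 * (1 / scaleSq D + r⁻¹ ^ 2) ^ (-(D : ℝ)) := by
  have hb := base_pos hD r
  have hc := scaleSq_pos hD
  have hT : 0 < 1 / scaleSq D + r⁻¹ ^ 2 := by positivity
  have hsq : (base D r ^ (-decayExp D)) ^ 2 = base D r ^ 2 * base D r ^ (-(D : ℝ)) := by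
    rw [← Real.rpow_mul_natCast hb.le, ← Real.rpow_two, ← Real.rpow_add hb]
    congr 1; unfold decayExp; push_cast; ring
  have hsplit : base D r ^ (-(D : ℝ))
      = ((r ^ (D : ℝ)) ^ 2)⁻¹ * (1 / scaleSq D + r⁻¹ ^ 2) ^ (-(D : ℝ)) := by
    have : base D r = r ^ 2 * (1 / scaleSq D + r⁻¹ ^ 2) := by unfold base; field_simp; ring
    rw [this, Real.mul_rpow (by positivity) hT.le, Real.rpow_neg (by positivity),
      ← Real.rpow_pow_comm hr.le]
  have h4D : r ^ (4 - (D : ℝ)) = r ^ 4 / r ^ (D : ℝ) := by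
    rw [Real.rpow_sub hr, Real.rpow_ofNat]
  rw [lamW_eq hD, div_pow, mul_pow, hsq, hsplit, h4D]
  unfold base
  field_simp
  ring

lemma tendsto_rpow_mul_lamW_sq_div_two (hD : 2 < D) {L : ℝ}
    (hL : Tendsto (fun r : ℝ => r ^ (4 - (D : ℝ))) atTop (𝓝 L)) :
    Tendsto (fun r => r ^ (D : ℝ) * LamW D r ^ 2 / 2) atTop
      (𝓝 (decayExp D ^ 2 / 2 * L * scaleSq D ^ ((D : ℝ) - 2))) := by
  have hc := scaleSq_pos hD
  have hinv : Tendsto (fun r : ℝ => r⁻¹ ^ 2) atTop (𝓝 0) := by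
    simpa using (tendsto_inv_atTop_zero : Tendsto (fun r : ℝ => r⁻¹) atTop (𝓝 0)).pow 2
  have hlim := ((hL.const_mul (decayExp D ^ 2 / 2)).mul
    ((hinv.const_sub (1 / scaleSq D)).pow 2)).mul
    ((hinv.const_add (1 / scaleSq D)).rpow_const (p := -(D : ℝ)) (Or.inl (by positivity)))
  have hval : (1 / scaleSq D - 0) ^ 2 * (1 / scaleSq D + 0) ^ (-(D : ℝ))
      = scaleSq D ^ ((D : ℝ) - 2) := by
    rw [sub_zero, add_zero, one_div, Real.inv_rpow hc.le, Real.rpow_neg hc.le, inv_inv,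
      Real.rpow_sub hc, Real.rpow_two]
    field_simp
  rw [← hval, ← mul_assoc]
  refine hlim.congr' ?_
  filter_upwards [eventually_gt_atTop 0] with r hr
  exact (rpow_mul_lamW_sq_div_two_eq hD hr).symm

theorem integral_uLamLamW_mul_lamW_eq_zero (hD : 5 ≤ D) :
    ∫ r in Ioi 0, ULamLamW D r * LamW D r * r ^ ((D : ℝ) - 1) = 0 := by
  have hD5 : (5 : ℝ) ≤ D := by exact_mod_cast hD
  have hlim := tendsto_rpow_mul_lamW_sq_div_two (D := D) (by omega) (L := 0) (by
    simpa [neg_sub] using tendsto_rpow_neg_atTop (y := (D : ℝ) - 4) (by linarith))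
  rw [mul_zero, zero_mul] at hlim
  refine integral_Ioi_scalingGenerator_mul_self (by positivity) (differentiable_lamW (by omega))
    ?_ hlim
  exact integrableOn_uLamLamW_mul_lamW_mul_rpow (by omega) (by unfold decayExp; linarith)
    (abs_uLamLamW_le (by omega))

theorem integral_uLamLamW_mul_lamW_four :
    ∫ r in Ioi 0, ULamLamW 4 r * LamW 4 r * r ^ 3 = 32 := by
  have hlim := tendsto_rpow_mul_lamW_sq_div_two (D := 4) (by norm_num) (L := 1) (by simp)
  have hval : decayExp 4 ^ 2 / 2 * 1 * scaleSq 4 ^ ((4 : ℕ) - 2 : ℝ) = 32 := by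
    norm_num [decayExp, scaleSq]
  rw [hval] at hlim
  have h : ∫ r in Ioi 0, ULamLamW 4 r * LamW 4 r * r ^ (((4 : ℕ) : ℝ) - 1) = 32 :=
    integral_Ioi_scalingGenerator_mul_self (by norm_num) (differentiable_lamW (by norm_num))
      (integrableOn_uLamLamW_mul_lamW_mul_rpow (by norm_num) one_lt_two abs_uLamLamW_four_le) hlim
  norm_num at h
  exact h

end AubinTalentiW

theorem stmt_10 :
    (∀ D : ℕ, 5 ≤ D →
      ∫ r in Set.Ioi (0 : ℝ), ULamLamW D r * LamW D r * r ^ ((D : ℝ) - 1) = 0) ∧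
    (∫ r in Set.Ioi (0 : ℝ), ULamLamW 4 r * LamW 4 r * r ^ 3 = 32) :=
  ⟨fun _ hD => AubinTalentiW.integral_uLamLamW_mul_lamW_eq_zero hD,
    AubinTalentiW.integral_uLamLamW_mul_lamW_four⟩
end

section
/- Vanishing of the Pohozaev-type functional at W: for D ≥ 3, ∫₀^∞ [ (W'(r))² − W(r)^{2D/(D−2)} ] r^{D−1} dr = 0, where W(r) = (1 + r²/(D(D−2)))^{−(D−2)/2}. -/
open MeasureTheory

/-! With `u = 1 + r² / (D (D - 2))` one has `W = u ^ (-(D - 2) / 2)`, `W' = -(r / D) u ^ (-D / 2)` and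
`W ^ (2D / (D - 2)) = u ^ (-D)`, so the integrand is `(r² / D² - 1) u ^ (-D) r ^ (D - 1)`. This is the
derivative of `-r ^ D u ^ (1 - D) / D`, which vanishes at `0` and decays like `r ^ (2 - D)` at infinity. -/

open Real Set Filter Topology

noncomputable section

namespace AubinTalenti

def base (d r : ℝ) : ℝ := 1 + r ^ 2 / (d * (d - 2))

def pohozaevDensity (d r : ℝ) : ℝ := (r ^ 2 / d ^ 2 - 1) * base d r ^ (-d) * r ^ (d - 1)

def pohozaevPrimitive (d r : ℝ) : ℝ := -(r ^ d * base d r ^ (1 - d)) / d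

variable {d : ℝ}

lemma base_pos (hd : 2 < d) (r : ℝ) : 0 < base d r := by
  have : 0 < d * (d - 2) := by nlinarith
  unfold base; positivity

lemma hasDerivAt_base (r : ℝ) : HasDerivAt (base d) (2 * r / (d * (d - 2))) r := by
  unfold base
  simpa using ((hasDerivAt_pow 2 r).div_const (d * (d - 2))).const_add 1

lemma continuous_base : Continuous (base d) := by
  unfold base; fun_prop

lemma hasDerivAt_base_rpow (hd : 2 < d) (r : ℝ) :
    HasDerivAt (fun r => base d r ^ (-((d - 2) / 2))) (-(r / d) * base d r ^ (-(d / 2))) r := by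
  have h := (hasDerivAt_base (d := d) r).rpow_const (p := -((d - 2) / 2)) (Or.inl (base_pos hd r).ne')
  rw [show -((d - 2) / 2) - 1 = -(d / 2) by ring] at h
  convert h using 1
  field_simp [show d - 2 ≠ 0 by linarith]

lemma hasDerivAt_pohozaevPrimitive (hd : 2 < d) {r : ℝ} (hr : 0 < r) :
    HasDerivAt (pohozaevPrimitive d) (pohozaevDensity d r) r := by
  have hu := base_pos hd r
  have h : HasDerivAt (pohozaevPrimitive d) _ r :=
    ((Real.hasDerivAt_rpow_const (p := d) (Or.inl hr.ne')).mul
      ((hasDerivAt_base (d := d) r).rpow_const (p := 1 - d) (Or.inl hu.ne'))).neg.div_const d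
  refine h.congr_deriv ?_
  have e1 : base d r ^ (1 - d) = base d r * base d r ^ (-d) := by
    rw [show 1 - d = 1 + -d by ring, rpow_add hu, rpow_one]
  have e2 : r ^ d = r * r ^ (d - 1) := by
    rw [rpow_sub_one hr.ne']; field_simp
  unfold pohozaevDensity
  rw [show 1 - d - 1 = -d by ring, e1, e2, base]
  field_simp [show d - 2 ≠ 0 by linarith, show d ≠ 0 by linarith]
  ring

lemma pohozaevDensity_nonneg (hd : 2 < d) {r : ℝ} (hr : d ≤ r) : 0 ≤ pohozaevDensity d r := by
  have : 1 ≤ r ^ 2 / d ^ 2 := by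
    rw [le_div_iff₀ (by positivity)]; nlinarith
  have := base_pos hd r
  unfold pohozaevDensity
  apply mul_nonneg (mul_nonneg (by linarith) (by positivity))
  exact rpow_nonneg (by linarith) _

lemma continuous_pohozaevDensity (hd : 2 < d) : Continuous (pohozaevDensity d) := by
  unfold pohozaevDensity
  refine Continuous.mul ?_ (continuous_id.rpow_const fun _ => Or.inr (by linarith))
  exact (by fun_prop : Continuous fun r : ℝ => r ^ 2 / d ^ 2 - 1).mul
    (continuous_base.rpow_const fun r => Or.inl (base_pos hd r).ne')

lemma continuous_pohozaevPrimitive (hd : 2 < d) : Continuous (pohozaevPrimitive d) := by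
  unfold pohozaevPrimitive
  refine ((continuous_id.rpow_const fun _ => Or.inr (by linarith)).mul ?_).neg.div_const d
  exact continuous_base.rpow_const fun r => Or.inl (base_pos hd r).ne'

lemma pohozaevPrimitive_zero (hd : d ≠ 0) : pohozaevPrimitive d 0 = 0 := by
  simp [pohozaevPrimitive, zero_rpow hd]

lemma rpow_mul_base_rpow_le (hd : 2 < d) {r : ℝ} (hr : 0 < r) :
    r ^ d * base d r ^ (1 - d) ≤ (d * (d - 2)) ^ (d - 1) * r ^ (2 - d) := by
  have ha : 0 < d * (d - 2) := by nlinarith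
  have hb : base d r ^ (1 - d) ≤ (r ^ 2 / (d * (d - 2))) ^ (1 - d) :=
    rpow_le_rpow_of_nonpos (by positivity) (by unfold base; linarith) (by linarith)
  calc r ^ d * base d r ^ (1 - d) ≤ r ^ d * (r ^ 2 / (d * (d - 2))) ^ (1 - d) := by gcongr
    _ = (d * (d - 2)) ^ (d - 1) * r ^ (2 - d) := by
      rw [← rpow_two, div_rpow (by positivity) ha.le, ← rpow_mul hr.le, div_eq_mul_inv,
        ← rpow_neg ha.le, neg_sub, show 2 - d = 2 * (1 - d) + d by ring, rpow_add hr]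
      ring

lemma tendsto_pohozaevPrimitive_atTop (hd : 2 < d) :
    Tendsto (pohozaevPrimitive d) atTop (𝓝 0) := by
  have hdecay : Tendsto (fun r : ℝ => (d * (d - 2)) ^ (d - 1) * r ^ (2 - d)) atTop (𝓝 0) := by
    simpa [neg_sub] using (tendsto_rpow_neg_atTop (y := d - 2) (by linarith)).const_mul
      ((d * (d - 2)) ^ (d - 1))
  have h : Tendsto (fun r : ℝ => r ^ d * base d r ^ (1 - d)) atTop (𝓝 0) := by
    refine squeeze_zero' ?_ ?_ hdecay
    · filter_upwards [eventually_gt_atTop 0] with r hr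
      exact mul_nonneg (rpow_nonneg hr.le _) (rpow_nonneg (base_pos hd r).le _)
    · filter_upwards [eventually_gt_atTop 0] with r hr
      exact rpow_mul_base_rpow_le hd hr
  have h' := h.neg.div_const d
  rwa [neg_zero, zero_div] at h'

lemma integrableOn_pohozaevDensity (hd : 2 < d) :
    IntegrableOn (pohozaevDensity d) (Ioi 0) := by
  rw [← Ioc_union_Ioi_eq_Ioi (by linarith : (0 : ℝ) ≤ d)]
  refine (continuous_pohozaevDensity hd).integrableOn_Ioc.union ?_
  -- on `(d, ∞)` the density is a nonnegative derivative of a convergent function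
  exact integrableOn_Ioi_deriv_of_nonneg (continuous_pohozaevPrimitive hd).continuousWithinAt
    (fun r hr => hasDerivAt_pohozaevPrimitive hd (by linarith [mem_Ioi.mp hr]))
    (fun r hr => pohozaevDensity_nonneg hd (le_of_lt hr)) (tendsto_pohozaevPrimitive_atTop hd)

theorem integral_pohozaevDensity (hd : 2 < d) : ∫ r in Ioi 0, pohozaevDensity d r = 0 := by
  rw [integral_Ioi_of_hasDerivAt_of_tendsto (continuous_pohozaevPrimitive hd).continuousWithinAt
    (fun r hr => hasDerivAt_pohozaevPrimitive hd hr) (integrableOn_pohozaevDensity hd)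
    (tendsto_pohozaevPrimitive_atTop hd), pohozaevPrimitive_zero (by linarith), sub_zero]

end AubinTalenti

end

open AubinTalenti

lemma AubinTalentiW_integrand_eq {D : ℕ} (hD : 2 < (D : ℝ)) (r : ℝ) :
    ((deriv (AubinTalentiW D) r) ^ 2
        - (AubinTalentiW D r) ^ ((2 * (D : ℝ)) / ((D : ℝ) - 2))) * r ^ ((D : ℝ) - 1)
      = pohozaevDensity D r := by
  have hu := base_pos hD r
  have hderiv : deriv (AubinTalentiW D) r = -(r / D) * base D r ^ (-((D : ℝ) / 2)) :=
    (hasDerivAt_base_rpow hD r).deriv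
  have hsq : (base D r ^ (-((D : ℝ) / 2))) ^ 2 = base D r ^ (-(D : ℝ)) := by
    rw [← rpow_natCast, ← rpow_mul hu.le]; ring_nf
  have hpow : AubinTalentiW D r ^ ((2 * (D : ℝ)) / ((D : ℝ) - 2)) = base D r ^ (-(D : ℝ)) := by
    rw [AubinTalentiW, ← base, ← rpow_mul hu.le]
    congr 1
    field_simp [show (D : ℝ) - 2 ≠ 0 by linarith]
  rw [hderiv, hpow, mul_pow, hsq, pohozaevDensity]
  ring

theorem stmt_12 (D : ℕ) (hD : 3 ≤ D) :
    ∫ r in Set.Ioi (0 : ℝ),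
      ((deriv (AubinTalentiW D) r) ^ 2
        - (AubinTalentiW D r) ^ ((2 * (D : ℝ)) / ((D : ℝ) - 2))) * r ^ ((D : ℝ) - 1) = 0 := by
  have hD' : (2 : ℝ) < D := by exact_mod_cast hD
  simp_rw [AubinTalentiW_integrand_eq hD']
  exact integral_pohozaevDensity hD'
end

section
/- Ignition-condition induction (abstract ODE lemma): suppose (ι₁,…,ι_K, λ₁,…,λ_K, a₁⁻,…,a_K⁻, a₁⁺,…,a_K⁺) satisfies the ignition condition with parameters (c₁, c₂, C₂) on a time interval I, and that for all t ∈ I, ((ι₁ι₂+1)/2)·(λ₁(t)/λ₂(t)) + a₁⁻(t)² + a₁⁺(t)² ≤ (1/2)min(1,c₂)·d_par(t)². Then (ι₂,…,ι_K, λ₂,…,λ_K, a₂⁻,…,a_K⁻, a₂⁺,…,a_K⁺) satisfies the ignition condition with parameters (2c₁, (1/2)min(1,c₂), 2C₂) on I. -/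
/-!
Splitting off the first bubble, `d_par² = h + d_par'²`, where `h = [ι₁ = ι₂] λ₁/λ₂ + a₁⁺² + a₁⁻²`
and `d_par'` is the proximity function of the shifted data. The smallness hypothesis reads
`h ≤ m d_par²/2` with `m = min 1 c₂ ≤ 1`, so `d_par' ≤ d_par ≤ 2 d_par'`. Hence a premise of the
shifted condition at index `j` is a premise of the original one at index `j + 1` (the head `h` is
absorbed into `c₂ d_par²`, and `c₁ d_par² ≤ 2 c₁ d_par'²`), and the integral bounds it yields for
`d_par` transfer to `d_par'` at the cost of a factor `2`.
-/

open Set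

/-- The parameter proximity function `d_par`, built from the scale ratios of
same-sign neighbouring bubbles and the stable/unstable components. -/
noncomputable def dpar (K : ℕ) (ι : ℕ → ℝ) (lam am ap : ℕ → ℝ → ℝ) (t : ℝ) : ℝ :=
  Real.sqrt
    ((∑ i ∈ Finset.Icc 1 (K - 1), if ι i = ι (i + 1) then lam i t / lam (i + 1) t else 0)
      + ∑ i ∈ Finset.Icc 1 K, ((ap i t) ^ 2 + (am i t) ^ 2))

/-- The ignition condition with parameters `c₁, c₂, C₂` on the time interval `I`
(Definition of "ignition condition": for any subinterval `[t₁,t₂] ⊆ I`, any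
`t₀ ∈ [t₁,t₂]` and any index `j ∈ {1,…,K}` satisfying one of the two pairs of
conditions, at least one of the two integral bounds holds).  The convention
`λ₀ = 0` is encoded by requiring `2 ≤ j` in the second alternative. -/
def IgnitionCondition (K : ℕ) (ι : ℕ → ℝ) (lam am ap : ℕ → ℝ → ℝ)
    (I : Set ℝ) (c₁ c₂ C₂ : ℝ) : Prop :=
  ∀ t₁ t₂ : ℝ, t₁ ≤ t₂ → Set.Icc t₁ t₂ ⊆ I →
    ∀ t₀ ∈ Set.Icc t₁ t₂, ∀ j : ℕ, 1 ≤ j → j ≤ K →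
    ((((∀ t ∈ Set.Icc t₁ t₂,
          (∑ i ∈ Finset.Icc 1 (K - 1),
              if ι i = ι (i + 1) ∧ i < j then lam i t / lam (i + 1) t else 0)
            + ∑ i ∈ Finset.Icc 1 (j - 1), ((ap i t) ^ 2 + (am i t) ^ 2)
          ≤ c₂ * (dpar K ι lam am ap t) ^ 2)
        ∧ c₁ * (dpar K ι lam am ap t₀) ^ 2 ≤ (ap j t₀) ^ 2 + (am j t₀) ^ 2)
      ∨ ((∀ t ∈ Set.Icc t₁ t₂,
          (∑ i ∈ Finset.Icc 1 (K - 1),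
              if ι i = ι (i + 1) ∧ i < j - 1 then lam i t / lam (i + 1) t else 0)
            + ∑ i ∈ Finset.Icc 1 (j - 1), ((ap i t) ^ 2 + (am i t) ^ 2)
          ≤ c₂ * (dpar K ι lam am ap t) ^ 2)
        ∧ 2 ≤ j
        ∧ c₁ * (dpar K ι lam am ap t₀) ^ 2
            ≤ ι (j - 1) * ι j * (lam (j - 1) t₀ / lam j t₀))) →
      ((∫ t in t₁..t₀, dpar K ι lam am ap t)
          ≤ C₂ * dpar K ι lam am ap t₁ * lam K t₁
        ∨ (∫ t in t₀..t₂, dpar K ι lam am ap t)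
          ≤ C₂ * dpar K ι lam am ap t₂ * lam K t₂))

lemma Finset.sum_Icc_one_eq_add_sum_Icc_one_succ {M : Type*} [AddCommMonoid M] (g : ℕ → M)
    {n : ℕ} (hn : 1 ≤ n) :
    ∑ i ∈ Finset.Icc 1 n, g i = g 1 + ∑ i ∈ Finset.Icc 1 (n - 1), g (i + 1) := by
  obtain ⟨n, rfl⟩ := Nat.exists_eq_add_of_le' hn
  rw [← Finset.insert_Icc_add_one_left_eq_Icc (by omega), Finset.sum_insert (by simp),
    Nat.add_sub_cancel, ← Finset.map_add_right_Icc, Finset.sum_map]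
  rfl

/-- The left-hand side of the smallness requirements in the ignition condition:
`Σ_{i ∈ S, i < m} λ_i/λ_{i+1} + Σ_{1 ≤ i ≤ n} (a_i⁺² + a_i⁻²)`. -/
noncomputable def partialDparSq (K : ℕ) (ι : ℕ → ℝ) (lam am ap : ℕ → ℝ → ℝ) (m n : ℕ)
    (t : ℝ) : ℝ :=
  (∑ i ∈ Finset.Icc 1 (K - 1), if ι i = ι (i + 1) ∧ i < m then lam i t / lam (i + 1) t else 0)
    + ∑ i ∈ Finset.Icc 1 n, ((ap i t) ^ 2 + (am i t) ^ 2)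

noncomputable def dparHeadSq (ι : ℕ → ℝ) (lam am ap : ℕ → ℝ → ℝ) (t : ℝ) : ℝ :=
  (if ι 1 = ι 2 then lam 1 t / lam 2 t else 0) + ((ap 1 t) ^ 2 + (am 1 t) ^ 2)

/-- Definitionally the hypothesis of `IgnitionCondition` for the data `t₁, t₂, t₀, j`. -/
def IgnitionPremise (K : ℕ) (ι : ℕ → ℝ) (lam am ap : ℕ → ℝ → ℝ) (c₁ c₂ t₁ t₂ t₀ : ℝ)
    (j : ℕ) : Prop :=
  ((∀ t ∈ Icc t₁ t₂, partialDparSq K ι lam am ap j (j - 1) t ≤ c₂ * dpar K ι lam am ap t ^ 2)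
      ∧ c₁ * dpar K ι lam am ap t₀ ^ 2 ≤ ap j t₀ ^ 2 + am j t₀ ^ 2)
    ∨ ((∀ t ∈ Icc t₁ t₂,
          partialDparSq K ι lam am ap (j - 1) (j - 1) t ≤ c₂ * dpar K ι lam am ap t ^ 2)
      ∧ 2 ≤ j ∧ c₁ * dpar K ι lam am ap t₀ ^ 2 ≤ ι (j - 1) * ι j * (lam (j - 1) t₀ / lam j t₀))

section Comparison

variable {d d' h m : ℝ}

lemma le_of_sq_eq_add (hd : 0 ≤ d) (hh : 0 ≤ h) (hsq : d ^ 2 = h + d' ^ 2) : d' ≤ d :=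
  le_of_abs_le (abs_le_of_sq_le_sq (by linarith) hd)

lemma sq_le_two_mul_sq_of_sq_eq_add (hd : d ^ 2 = h + d' ^ 2) (hh : h ≤ 1 / 2 * m * d ^ 2)
    (hm : m ≤ 1) : d ^ 2 ≤ 2 * d' ^ 2 := by
  nlinarith [sq_nonneg d]

lemma le_two_mul_of_sq_eq_add (hd' : 0 ≤ d') (hd : d ^ 2 = h + d' ^ 2)
    (hh : h ≤ 1 / 2 * m * d ^ 2) (hm : m ≤ 1) : d ≤ 2 * d' := by
  nlinarith [sq_le_two_mul_sq_of_sq_eq_add hd hh hm]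

/-- With `d² = h + d'²`, the head `h` and the tail bound `p ≤ m d'²/2` are both charged to
`d²`: `h + p ≤ (1 - m/2) h + m d²/2 ≤ m d² - m² d²/4`. -/
lemma add_le_mul_sq_of_sq_eq_add {p c : ℝ} (hd : d ^ 2 = h + d' ^ 2)
    (hh : h ≤ 1 / 2 * m * d ^ 2) (hp : p ≤ 1 / 2 * m * d' ^ 2) (hm : m ≤ 1) (hmc : m ≤ c) :
    h + p ≤ c * d ^ 2 := by
  nlinarith [sq_nonneg d, sq_nonneg (m * d)]

end Comparison

section Dpar

variable {K : ℕ} {ι : ℕ → ℝ} {lam am ap : ℕ → ℝ → ℝ}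

lemma partialDparSq_succ_succ (hK : 2 ≤ K) {m : ℕ} (hm : 1 ≤ m) (n : ℕ) (t : ℝ) :
    partialDparSq K ι lam am ap (m + 1) (n + 1) t
      = dparHeadSq ι lam am ap t
        + partialDparSq (K - 1) (fun i => ι (i + 1)) (fun i => lam (i + 1))
            (fun i => am (i + 1)) (fun i => ap (i + 1)) m n t := by
  unfold partialDparSq dparHeadSq
  rw [Finset.sum_Icc_one_eq_add_sum_Icc_one_succ _ (by omega : 1 ≤ K - 1),
    Finset.sum_Icc_one_eq_add_sum_Icc_one_succ _ (Nat.le_add_left 1 n), Nat.add_sub_cancel]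
  simp only [show 1 < m + 1 by omega, and_true, add_lt_add_iff_right]
  ring

lemma dpar_sq_eq_partialDparSq {t : ℝ} (hlam : ∀ i, 1 ≤ i → i ≤ K → 0 < lam i t) :
    dpar K ι lam am ap t ^ 2 = partialDparSq K ι lam am ap K K t := by
  have hratio : ∀ i ∈ Finset.Icc 1 (K - 1),
      (if ι i = ι (i + 1) then lam i t / lam (i + 1) t else 0)
        = if ι i = ι (i + 1) ∧ i < K then lam i t / lam (i + 1) t else 0 := by
    intro i hi
    rw [Finset.mem_Icc] at hi
    simp only [show i < K by omega, and_true]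
  have hnonneg : 0 ≤ partialDparSq K ι lam am ap K K t := by
    refine add_nonneg (Finset.sum_nonneg fun i hi => ?_)
      (Finset.sum_nonneg fun i _ => by positivity)
    rw [Finset.mem_Icc] at hi
    split_ifs
    · exact div_nonneg (hlam i hi.1 (by omega)).le (hlam (i + 1) (by omega) (by omega)).le
    · exact le_rfl
  rw [dpar, Finset.sum_congr rfl hratio]
  exact Real.sq_sqrt hnonneg

lemma dpar_sq_eq_dparHeadSq_add (hK : 2 ≤ K) {t : ℝ}
    (hlam : ∀ i, 1 ≤ i → i ≤ K → 0 < lam i t) :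
    dpar K ι lam am ap t ^ 2
      = dparHeadSq ι lam am ap t
        + dpar (K - 1) (fun i => ι (i + 1)) (fun i => lam (i + 1))
            (fun i => am (i + 1)) (fun i => ap (i + 1)) t ^ 2 := by
  have hsplit := partialDparSq_succ_succ (ι := ι) (lam := lam) (am := am) (ap := ap) hK
    (by omega : 1 ≤ K - 1) (K - 1) t
  rw [Nat.sub_add_cancel (by omega : 1 ≤ K)] at hsplit
  rw [dpar_sq_eq_partialDparSq hlam, hsplit,
    dpar_sq_eq_partialDparSq fun i h1 h2 => hlam (i + 1) (by omega) (by omega)]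

lemma dparHeadSq_nonneg {t : ℝ} (h1 : 0 < lam 1 t) (h2 : 0 < lam 2 t) :
    0 ≤ dparHeadSq ι lam am ap t := by
  have : 0 ≤ if ι 1 = ι 2 then lam 1 t / lam 2 t else 0 := by
    split_ifs
    · exact div_nonneg h1.le h2.le
    · exact le_rfl
  unfold dparHeadSq
  positivity

lemma dparHeadSq_eq_of_sign (h1 : ι 1 = 1 ∨ ι 1 = -1) (h2 : ι 2 = 1 ∨ ι 2 = -1) (t : ℝ) :
    dparHeadSq ι lam am ap t
      = (ι 1 * ι 2 + 1) / 2 * (lam 1 t / lam 2 t) + am 1 t ^ 2 + ap 1 t ^ 2 := by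
  unfold dparHeadSq
  rcases h1 with h1 | h1 <;> rcases h2 with h2 | h2 <;> norm_num [h1, h2] <;> ring

lemma continuousOn_dpar {I : Set ℝ}
    (hlam_pos : ∀ j, 1 ≤ j → j ≤ K → ∀ t ∈ I, 0 < lam j t)
    (hlam_cont : ∀ j, 1 ≤ j → j ≤ K → ContinuousOn (lam j) I)
    (ham_cont : ∀ j, 1 ≤ j → j ≤ K → ContinuousOn (am j) I)
    (hap_cont : ∀ j, 1 ≤ j → j ≤ K → ContinuousOn (ap j) I) :
    ContinuousOn (dpar K ι lam am ap) I := by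
  refine ContinuousOn.sqrt (.add (continuousOn_finsetSum _ fun i hi => ?_)
    (continuousOn_finsetSum _ fun i hi => ?_))
  all_goals rw [Finset.mem_Icc] at hi
  · split_ifs
    · exact (hlam_cont i hi.1 (by omega)).div (hlam_cont (i + 1) (by omega) (by omega))
        fun t ht => (hlam_pos (i + 1) (by omega) (by omega) t ht).ne'
    · exact continuousOn_const
  · exact ((hap_cont i hi.1 hi.2).pow 2).add ((ham_cont i hi.1 hi.2).pow 2)

lemma dpar_tail_le_dpar_and_dpar_le_two_mul (hK : 2 ≤ K) {m t : ℝ}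
    (hlam : ∀ i, 1 ≤ i → i ≤ K → 0 < lam i t)
    (hhead : dparHeadSq ι lam am ap t ≤ 1 / 2 * m * dpar K ι lam am ap t ^ 2) (hm : m ≤ 1) :
    dpar (K - 1) (fun i => ι (i + 1)) (fun i => lam (i + 1)) (fun i => am (i + 1))
        (fun i => ap (i + 1)) t ≤ dpar K ι lam am ap t
      ∧ dpar K ι lam am ap t ≤ 2 * dpar (K - 1) (fun i => ι (i + 1)) (fun i => lam (i + 1))
          (fun i => am (i + 1)) (fun i => ap (i + 1)) t :=
  have hsplit := dpar_sq_eq_dparHeadSq_add (am := am) (ap := ap) (ι := ι) hK hlam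
  ⟨le_of_sq_eq_add (Real.sqrt_nonneg _)
      (dparHeadSq_nonneg (hlam 1 le_rfl (by omega)) (hlam 2 (by omega) hK)) hsplit,
    le_two_mul_of_sq_eq_add (Real.sqrt_nonneg _) hsplit hhead hm⟩

lemma ignitionPremise_succ {c₁ c₂ m t₁ t₂ t₀ : ℝ} {j : ℕ} (hK : 2 ≤ K) (hj : 1 ≤ j) (hc₁ : 0 ≤ c₁) (hm : m ≤ 1)
    (hmc : m ≤ c₂) (ht₀ : t₀ ∈ Icc t₁ t₂)
    (hsplit : ∀ t ∈ Icc t₁ t₂, dpar K ι lam am ap t ^ 2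
      = dparHeadSq ι lam am ap t
        + dpar (K - 1) (fun i => ι (i + 1)) (fun i => lam (i + 1))
            (fun i => am (i + 1)) (fun i => ap (i + 1)) t ^ 2)
    (hhead : ∀ t ∈ Icc t₁ t₂, dparHeadSq ι lam am ap t ≤ 1 / 2 * m * dpar K ι lam am ap t ^ 2)
    (hprem : IgnitionPremise (K - 1) (fun i => ι (i + 1)) (fun i => lam (i + 1))
      (fun i => am (i + 1)) (fun i => ap (i + 1)) (2 * c₁) (1 / 2 * m) t₁ t₂ t₀ j) :
    IgnitionPremise K ι lam am ap c₁ c₂ t₁ t₂ t₀ (j + 1) := by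
  obtain ⟨n, rfl⟩ := Nat.exists_eq_add_of_le' hj
  have hpartial : ∀ k, 1 ≤ k → (∀ t ∈ Icc t₁ t₂,
      partialDparSq (K - 1) (fun i => ι (i + 1)) (fun i => lam (i + 1)) (fun i => am (i + 1))
        (fun i => ap (i + 1)) k n t
      ≤ 1 / 2 * m * dpar (K - 1) (fun i => ι (i + 1)) (fun i => lam (i + 1))
          (fun i => am (i + 1)) (fun i => ap (i + 1)) t ^ 2) →
      ∀ t ∈ Icc t₁ t₂, partialDparSq K ι lam am ap (k + 1) (n + 1) t
        ≤ c₂ * dpar K ι lam am ap t ^ 2 := fun k hk hp t ht => by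
    rw [partialDparSq_succ_succ hK hk]
    exact add_le_mul_sq_of_sq_eq_add (hsplit t ht) (hhead t ht) (hp t ht) hm hmc
  have hscale : c₁ * dpar K ι lam am ap t₀ ^ 2
      ≤ 2 * c₁ * dpar (K - 1) (fun i => ι (i + 1)) (fun i => lam (i + 1))
          (fun i => am (i + 1)) (fun i => ap (i + 1)) t₀ ^ 2 := by
    have := mul_le_mul_of_nonneg_left
      (sq_le_two_mul_sq_of_sq_eq_add (hsplit t₀ ht₀) (hhead t₀ ht₀) hm) hc₁
    linarith
  simp only [IgnitionPremise, Nat.add_sub_cancel] at hprem ⊢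
  rcases hprem with ⟨hp, hbig⟩ | ⟨hp, hn, hbig⟩
  · exact .inl ⟨hpartial (n + 1) hj hp, hscale.trans hbig⟩
  · obtain ⟨k, rfl⟩ := Nat.exists_eq_add_of_le' (by omega : 1 ≤ n)
    exact .inr ⟨hpartial (k + 1) (by omega) hp, by omega, hscale.trans hbig⟩

end Dpar

lemma intervalIntegral_le_two_mul_of_le {f g : ℝ → ℝ} {a b s C L : ℝ} (hab : a ≤ b)
    (hf : ContinuousOn f (Icc a b)) (hg : ContinuousOn g (Icc a b))
    (hfg : ∀ t ∈ Icc a b, f t ≤ g t) (hgs : g s ≤ 2 * f s) (hCL : 0 ≤ C * L)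
    (h : ∫ t in a..b, g t ≤ C * g s * L) :
    ∫ t in a..b, f t ≤ 2 * C * f s * L := by
  have hmono : ∫ t in a..b, f t ≤ ∫ t in a..b, g t :=
    intervalIntegral.integral_mono_on hab (hf.intervalIntegrable_of_Icc hab)
      (hg.intervalIntegrable_of_Icc hab) hfg
  nlinarith

lemma integral_bound_or_of_le_of_le_two_mul {f g L : ℝ → ℝ} {t₁ t₂ t₀ C : ℝ}
    (ht₀ : t₀ ∈ Icc t₁ t₂) (hf : ContinuousOn f (Icc t₁ t₂)) (hg : ContinuousOn g (Icc t₁ t₂))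
    (hfg : ∀ t ∈ Icc t₁ t₂, f t ≤ g t ∧ g t ≤ 2 * f t) (hCL : ∀ t ∈ Icc t₁ t₂, 0 ≤ C * L t)
    (h : (∫ t in t₁..t₀, g t) ≤ C * g t₁ * L t₁ ∨ (∫ t in t₀..t₂, g t) ≤ C * g t₂ * L t₂) :
    (∫ t in t₁..t₀, f t) ≤ 2 * C * f t₁ * L t₁ ∨ (∫ t in t₀..t₂, f t) ≤ 2 * C * f t₂ * L t₂ := by
  have hsub₁ : Icc t₁ t₀ ⊆ Icc t₁ t₂ := Icc_subset_Icc_right ht₀.2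
  have hsub₂ : Icc t₀ t₂ ⊆ Icc t₁ t₂ := Icc_subset_Icc_left ht₀.1
  have ht₁ : t₁ ∈ Icc t₁ t₂ := left_mem_Icc.2 (ht₀.1.trans ht₀.2)
  have ht₂ : t₂ ∈ Icc t₁ t₂ := right_mem_Icc.2 (ht₀.1.trans ht₀.2)
  refine h.imp (fun h => ?_) (fun h => ?_)
  · exact intervalIntegral_le_two_mul_of_le ht₀.1 (hf.mono hsub₁) (hg.mono hsub₁)
      (fun t ht => (hfg t (hsub₁ ht)).1) (hfg t₁ ht₁).2 (hCL t₁ ht₁) h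
  · exact intervalIntegral_le_two_mul_of_le ht₀.2 (hf.mono hsub₂) (hg.mono hsub₂)
      (fun t ht => (hfg t (hsub₂ ht)).1) (hfg t₂ ht₂).2 (hCL t₂ ht₂) h

theorem stmt_16_general (K : ℕ) (hK : 2 ≤ K) (ι : ℕ → ℝ) (lam am ap : ℕ → ℝ → ℝ)
    (I : Set ℝ) (c₁ c₂ C₂ : ℝ) (hc₁ : 0 < c₁) (hC₂ : 0 < C₂)
    (hι : ∀ j, 1 ≤ j → j ≤ K → ι j = 1 ∨ ι j = -1)
    (hlam_pos : ∀ j, 1 ≤ j → j ≤ K → ∀ t ∈ I, 0 < lam j t)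
    (hlam_cont : ∀ j, 1 ≤ j → j ≤ K → ContinuousOn (lam j) I)
    (ham_cont : ∀ j, 1 ≤ j → j ≤ K → ContinuousOn (am j) I)
    (hap_cont : ∀ j, 1 ≤ j → j ≤ K → ContinuousOn (ap j) I)
    (hign : IgnitionCondition K ι lam am ap I c₁ c₂ C₂)
    (hsmall : ∀ t ∈ I,
      (ι 1 * ι 2 + 1) / 2 * (lam 1 t / lam 2 t) + (am 1 t) ^ 2 + (ap 1 t) ^ 2
        ≤ 1 / 2 * min 1 c₂ * (dpar K ι lam am ap t) ^ 2) :
    IgnitionCondition (K - 1) (fun i => ι (i + 1)) (fun i => lam (i + 1))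
      (fun i => am (i + 1)) (fun i => ap (i + 1)) I
      (2 * c₁) (1 / 2 * min 1 c₂) (2 * C₂) := by
  intro t₁ t₂ h12 hsub t₀ ht₀ j hj1 hjK hyp
  have hlam : ∀ t ∈ Icc t₁ t₂, ∀ i, 1 ≤ i → i ≤ K → 0 < lam i t := fun t ht i h1 h2 =>
    hlam_pos i h1 h2 t (hsub ht)
  have hhead : ∀ t ∈ Icc t₁ t₂,
      dparHeadSq ι lam am ap t ≤ 1 / 2 * min 1 c₂ * dpar K ι lam am ap t ^ 2 := fun t ht =>
    (dparHeadSq_eq_of_sign (hι 1 le_rfl (by omega)) (hι 2 (by omega) hK) t).trans_le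
      (hsmall t (hsub ht))
  have hprem := ignitionPremise_succ hK hj1 hc₁.le (min_le_left 1 c₂) (min_le_right 1 c₂) ht₀
    (fun t ht => dpar_sq_eq_dparHeadSq_add hK (hlam t ht)) hhead hyp
  have hcont' : ContinuousOn (dpar (K - 1) (fun i => ι (i + 1)) (fun i => lam (i + 1))
      (fun i => am (i + 1)) (fun i => ap (i + 1))) I := continuousOn_dpar
    (fun i h1 h2 => hlam_pos (i + 1) (by omega) (by omega))
    (fun i h1 h2 => hlam_cont (i + 1) (by omega) (by omega))
    (fun i h1 h2 => ham_cont (i + 1) (by omega) (by omega))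
    (fun i h1 h2 => hap_cont (i + 1) (by omega) (by omega))
  beta_reduce
  rw [Nat.sub_add_cancel (by omega : 1 ≤ K)]
  exact integral_bound_or_of_le_of_le_two_mul ht₀ (hcont'.mono hsub)
    ((continuousOn_dpar hlam_pos hlam_cont ham_cont hap_cont).mono hsub)
    (fun t ht => dpar_tail_le_dpar_and_dpar_le_two_mul hK (hlam t ht) (hhead t ht)
      (min_le_left _ _))
    (fun t ht => mul_nonneg hC₂.le (hlam t ht K (by omega) le_rfl).le)
    (hign t₁ t₂ h12 hsub t₀ ht₀ (j + 1) (by omega) (by omega) hprem)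

theorem stmt_16 (K : ℕ) (hK : 2 ≤ K) (ι : ℕ → ℝ) (lam am ap : ℕ → ℝ → ℝ)
    (I : Set ℝ) (c₁ c₂ C₂ : ℝ) (hc₁ : 0 < c₁) (hc₂ : 0 < c₂) (hC₂ : 0 < C₂)
    (hι : ∀ j, 1 ≤ j → j ≤ K → ι j = 1 ∨ ι j = -1)
    (hlam_pos : ∀ j, 1 ≤ j → j ≤ K → ∀ t ∈ I, 0 < lam j t)
    (hlam_cont : ∀ j, 1 ≤ j → j ≤ K → ContinuousOn (lam j) I)
    (ham_cont : ∀ j, 1 ≤ j → j ≤ K → ContinuousOn (am j) I)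
    (hap_cont : ∀ j, 1 ≤ j → j ≤ K → ContinuousOn (ap j) I)
    (hign : IgnitionCondition K ι lam am ap I c₁ c₂ C₂)
    (hsmall : ∀ t ∈ I,
      (ι 1 * ι 2 + 1) / 2 * (lam 1 t / lam 2 t) + (am 1 t) ^ 2 + (ap 1 t) ^ 2
        ≤ 1 / 2 * min 1 c₂ * (dpar K ι lam am ap t) ^ 2) :
    IgnitionCondition (K - 1) (fun i => ι (i + 1)) (fun i => lam (i + 1))
      (fun i => am (i + 1)) (fun i => ap (i + 1)) I
      (2 * c₁) (1 / 2 * min 1 c₂) (2 * C₂) :=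
  stmt_16_general K hK ι lam am ap I c₁ c₂ C₂ hc₁ hC₂ hι hlam_pos hlam_cont ham_cont hap_cont hign
    hsmall
end

section
/- Base case of the ejection integral bound for one mode (K = 1): assume that λ₁, a₁⁻, a₁⁺ ∈ C([t₁,t₂]) with λ₁ > 0 satisfy the ignition condition with parameters (1/2, c₂, C₂) for some c₂, C₂ > 0, where d_par(t) = sqrt(a₁⁺(t)² + a₁⁻(t)²). Then ∫_{t₁}^{t₂} d_par(t) dt ≤ C₂ (d_par(t₁)λ₁(t₁) + d_par(t₂)λ₁(t₂)). -/
open Set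

/-!
The sets `S = {t | ∫_{t₁}^{t} d_par ≤ B₁}` and `T = {t | ∫_{t}^{t₂} d_par ≤ B₂}` are closed in
`[t₁, t₂]`, contain `t₁` and `t₂` respectively, and by the ignition condition cover `[t₁, t₂]`.
By connectedness they meet, and splitting the integral at a common point gives the bound.
For `K = 1` the hypothesis of the ignition condition holds at every time, since
`d_par² = (a₁⁺)² + (a₁⁻)²`.
-/

theorem intervalIntegral_le_add_of_forall_le_or_le {f : ℝ → ℝ} {a b B₁ B₂ : ℝ} (hab : a ≤ b)
    (hf : MeasureTheory.IntegrableOn f (Icc a b)) (hB₁ : 0 ≤ B₁) (hB₂ : 0 ≤ B₂)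
    (h : ∀ t ∈ Icc a b, (∫ x in a..t, f x) ≤ B₁ ∨ (∫ x in t..b, f x) ≤ B₂) :
    (∫ x in a..b, f x) ≤ B₁ + B₂ := by
  rw [← uIcc_of_le hab] at hf
  have hF := intervalIntegral.continuousOn_primitive_interval hf
  have hG := intervalIntegral.continuousOn_primitive_interval_left hf
  rw [uIcc_of_le hab] at hF hG hf
  set S := Icc a b ∩ (fun t => ∫ x in a..t, f x) ⁻¹' Iic B₁
  set T := Icc a b ∩ (fun t => ∫ x in t..b, f x) ⁻¹' Iic B₂
  have haS : a ∈ S := ⟨left_mem_Icc.2 hab, by simpa using hB₁⟩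
  have hbT : b ∈ T := ⟨right_mem_Icc.2 hab, by simpa using hB₂⟩
  obtain ⟨t, ht, ⟨-, htS⟩, ⟨-, htT⟩⟩ := isPreconnected_closed_iff.1 isPreconnected_Icc S T
    (hF.preimage_isClosed_of_isClosed isClosed_Icc isClosed_Iic)
    (hG.preimage_isClosed_of_isClosed isClosed_Icc isClosed_Iic)
    (fun t ht => (h t ht).imp (⟨ht, ·⟩) (⟨ht, ·⟩))
    ⟨a, left_mem_Icc.2 hab, haS⟩ ⟨b, right_mem_Icc.2 hab, hbT⟩
  have hint : ∀ {c d}, c ∈ Icc a b → d ∈ Icc a b → IntervalIntegrable f MeasureTheory.volume c d :=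
    fun hc hd => (hf.mono_set (uIcc_subset_Icc hc hd)).intervalIntegrable
  rw [← intervalIntegral.integral_add_adjacent_intervals (hint (left_mem_Icc.2 hab) ht)
    (hint ht (right_mem_Icc.2 hab))]
  exact add_le_add htS htT

section OneMode

variable {ι : ℕ → ℝ} {lam am ap : ℕ → ℝ → ℝ}

theorem dpar_one (t : ℝ) : dpar 1 ι lam am ap t = √(ap 1 t ^ 2 + am 1 t ^ 2) := by
  simp [dpar]

theorem continuousOn_dpar_one {s : Set ℝ} (ham : ContinuousOn (am 1) s)
    (hap : ContinuousOn (ap 1) s) : ContinuousOn (dpar 1 ι lam am ap) s := by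
  have hdpar : dpar 1 ι lam am ap = fun t => √(ap 1 t ^ 2 + am 1 t ^ 2) := funext dpar_one
  exact hdpar ▸ ((hap.pow 2).add (ham.pow 2)).sqrt

theorem IgnitionCondition.le_or_le_of_one {I : Set ℝ} {c₁ c₂ C₂ : ℝ}
    (hign : IgnitionCondition 1 ι lam am ap I c₁ c₂ C₂) (hc₁ : c₁ ≤ 1) (hc₂ : 0 ≤ c₂)
    {s₁ s₂ : ℝ} (hs : s₁ ≤ s₂) (hI : Icc s₁ s₂ ⊆ I) (t₀ : ℝ) (ht₀ : t₀ ∈ Icc s₁ s₂) :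
    (∫ t in s₁..t₀, dpar 1 ι lam am ap t) ≤ C₂ * dpar 1 ι lam am ap s₁ * lam 1 s₁ ∨
      (∫ t in t₀..s₂, dpar 1 ι lam am ap t) ≤ C₂ * dpar 1 ι lam am ap s₂ * lam 1 s₂ := by
  refine hign s₁ s₂ hs hI t₀ ht₀ 1 le_rfl le_rfl (Or.inl ⟨fun t _ => ?_, ?_⟩)
  · simpa using mul_nonneg hc₂ (sq_nonneg _)
  · rw [dpar_one, Real.sq_sqrt (by positivity)]
    nlinarith [sq_nonneg (ap 1 t₀), sq_nonneg (am 1 t₀)]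

end OneMode

theorem stmt_17_general (t₁ t₂ : ℝ) (ht : t₁ ≤ t₂) (ι : ℕ → ℝ) (lam am ap : ℕ → ℝ → ℝ)
    (hlam_pos : ∀ t ∈ Set.Icc t₁ t₂, 0 < lam 1 t)
    (ham_cont : ContinuousOn (am 1) (Set.Icc t₁ t₂))
    (hap_cont : ContinuousOn (ap 1) (Set.Icc t₁ t₂))
    (c₂ C₂ : ℝ) (hc₂ : 0 < c₂) (hC₂ : 0 < C₂)
    (hign : IgnitionCondition 1 ι lam am ap (Set.Icc t₁ t₂) (1 / 2) c₂ C₂) :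
    (∫ t in t₁..t₂, dpar 1 ι lam am ap t)
      ≤ C₂ * (dpar 1 ι lam am ap t₁ * lam 1 t₁ + dpar 1 ι lam am ap t₂ * lam 1 t₂) := by
  have hbound : ∀ t ∈ Icc t₁ t₂, 0 ≤ C₂ * dpar 1 ι lam am ap t * lam 1 t := fun t ht =>
    mul_nonneg (mul_nonneg hC₂.le (by rw [dpar_one]; positivity)) (hlam_pos t ht).le
  rw [mul_add, ← mul_assoc, ← mul_assoc]
  exact intervalIntegral_le_add_of_forall_le_or_le ht
    ((continuousOn_dpar_one ham_cont hap_cont).integrableOn_Icc)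
    (hbound t₁ (left_mem_Icc.2 ht)) (hbound t₂ (right_mem_Icc.2 ht))
    (hign.le_or_le_of_one (by norm_num) hc₂.le ht subset_rfl)

theorem stmt_17 (t₁ t₂ : ℝ) (ht : t₁ ≤ t₂) (ι : ℕ → ℝ) (lam am ap : ℕ → ℝ → ℝ)
    (hι : ι 1 = 1 ∨ ι 1 = -1)
    (hlam_pos : ∀ t ∈ Set.Icc t₁ t₂, 0 < lam 1 t)
    (hlam_cont : ContinuousOn (lam 1) (Set.Icc t₁ t₂))
    (ham_cont : ContinuousOn (am 1) (Set.Icc t₁ t₂))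
    (hap_cont : ContinuousOn (ap 1) (Set.Icc t₁ t₂))
    (c₂ C₂ : ℝ) (hc₂ : 0 < c₂) (hC₂ : 0 < C₂)
    (hign : IgnitionCondition 1 ι lam am ap (Set.Icc t₁ t₂) (1 / 2) c₂ C₂) :
    (∫ t in t₁..t₂, dpar 1 ι lam am ap t)
      ≤ C₂ * (dpar 1 ι lam am ap t₁ * lam 1 t₁ + dpar 1 ι lam am ap t₂ * lam 1 t₂) :=
  stmt_17_general t₁ t₂ ht ι lam am ap hlam_pos ham_cont hap_cont c₂ C₂ hc₂ hC₂ hign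
end
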